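/- arXiv:2312.03142 — 4 statements merged into one kernel-verified Lean document; each statement's English description precedes it below -/
import Mathlib

section
/- For the Erdős–Rényi random graph G_n(α) with p_n = n^{−α}, the variance σ_n² = σ_{1n}² + σ_{2n}² of the average closure coefficient satisfies: σ_n² = (6/n^{3−α})(1+o(1)) if α > 1/2; σ_n² = (8/(n²√n))(1+o(1)) if α = 1/2; and σ_n² = (2/n^{2+α})(1+o(1)) if α < 1/2. In particular, as a function of α the leading constant changes discontinuously at α = 1/2 (lim_{α→(1/2)⁻} 2/n^{2+α} = 2/(n²√n) ≠ 8/(n²√n) and lim_{α→(1/2)⁺} 6/n^{3−α} = 6/(n²√n) ≠ 8/(n²√n)). -/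
open MeasureTheory ProbabilityTheory Finset Filter

noncomputable section

/-- Edge probability `p_n = n^{-α}`. -/
def pn (α : ℝ) (n : ℕ) : ℝ := (n : ℝ) ^ (-α)

/-- Edge mean `μ_{ij} = p_n w_{ij}` in the graph on `n` vertices. -/
def edgeP (α : ℝ) (w : ℕ → ℕ → ℕ → ℝ) (n i j : ℕ) : ℝ := pn α n * w n i j

/-- `ν_i = Σ_{j,k} p_n² w_{ij} w_{jk}`. -/
def nu (α : ℝ) (w : ℕ → ℕ → ℕ → ℝ) (n i : ℕ) : ℝ :=
  ∑ j ∈ Finset.range n, ∑ k ∈ Finset.range n, edgeP α w n i j * edgeP α w n j k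

/-- Centered edge indicator `Ā_{ij} = A_{ij} - p_n w_{ij}`. -/
def Abar {Ω : ℕ → Type} (α : ℝ) (w : ℕ → ℕ → ℕ → ℝ) (A : ∀ n, ℕ → ℕ → Ω n → ℝ)
    (n i j : ℕ) (ω : Ω n) : ℝ := A n i j ω - edgeP α w n i j

/-- The average closure coefficient `𝓗̄_n`; summands with a vanishing denominator are `0`
(real division by zero is zero). -/
def closureAvg {Ω : ℕ → Type} (A : ∀ n, ℕ → ℕ → Ω n → ℝ) (n : ℕ) (ω : Ω n) : ℝ :=
  ((n : ℝ))⁻¹ * ∑ i ∈ Finset.range n,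
    (∑ j ∈ (Finset.range n).erase i, ∑ k ∈ ((Finset.range n).erase i).erase j,
        A n i j ω * A n j k ω * A n k i ω) /
    (∑ j ∈ (Finset.range n).erase i, ∑ k ∈ ((Finset.range n).erase i).erase j,
        A n i j ω * A n j k ω)

/-- The hypotheses of the heterogeneous Erdős–Rényi random graph `G_n(α, β, W)`:
symmetric weights `w_{ij} ∈ [β,1]` (vanishing on the diagonal), and independent Bernoulli
edge indicators `A_{ij} = A_{ji} ∈ {0,1}` with `P(A_{ij} = 1) = p_n w_{ij}`. -/
structure IsHeterER (α β : ℝ) {Ω : ℕ → Type} [∀ n, MeasurableSpace (Ω n)]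
    (μ : ∀ n, Measure (Ω n)) (w : ℕ → ℕ → ℕ → ℝ) (A : ∀ n, ℕ → ℕ → Ω n → ℝ) : Prop where
  alpha_mem : α ∈ Set.Ioo (0 : ℝ) 1
  beta_mem : β ∈ Set.Ioo (0 : ℝ) 1
  prob : ∀ n, IsProbabilityMeasure (μ n)
  w_symm : ∀ n i j, w n i j = w n j i
  w_diag : ∀ n i, w n i i = 0
  w_mem : ∀ n, ∀ i ∈ Finset.range n, ∀ j ∈ Finset.range n, i ≠ j → w n i j ∈ Set.Icc β 1
  A_symm : ∀ n i j ω, A n i j ω = A n j i ω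
  A_diag : ∀ n i ω, A n i i ω = 0
  A_meas : ∀ n i j, Measurable (A n i j)
  A_vals : ∀ n i j ω, A n i j ω = 0 ∨ A n i j ω = 1
  A_prob : ∀ n, ∀ i ∈ Finset.range n, ∀ j ∈ Finset.range n, i ≠ j →
      μ n {ω | A n i j ω = 1} = ENNReal.ofReal (edgeP α w n i j)
  A_indep : ∀ n, iIndepFun
      (fun (e : {q : ℕ × ℕ // q.1 < q.2}) ω => A n e.1.1 e.1.2 ω) (μ n)

/-- `b_{ij} = Σ_k μ_{ik} μ_{jk} / ν_k`. -/
def bcoef (α : ℝ) (w : ℕ → ℕ → ℕ → ℝ) (n i j : ℕ) : ℝ :=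
  ∑ k ∈ Finset.range n, edgeP α w n i k * edgeP α w n j k / nu α w n k

/-- `c_{ij} = Σ_k μ_{ik} μ_{jk} / ν_i`. -/
def ccoef (α : ℝ) (w : ℕ → ℕ → ℕ → ℝ) (n i j : ℕ) : ℝ :=
  ∑ k ∈ Finset.range n, edgeP α w n i k * edgeP α w n j k / nu α w n i

/-- `a_s = Σ_{i,j,k} μ_{ij} μ_{jk} μ_{ki} μ_{is} / ν_i²`. -/
def acoef (α : ℝ) (w : ℕ → ℕ → ℕ → ℝ) (n s : ℕ) : ℝ :=
  ∑ i ∈ Finset.range n, ∑ j ∈ Finset.range n, ∑ k ∈ Finset.range n,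
    edgeP α w n i j * edgeP α w n j k * edgeP α w n k i * edgeP α w n i s / (nu α w n i) ^ 2

/-- `e_{is} = Σ_{j,k,t} μ_{ij} μ_{jk} μ_{ki} μ_{st} / ν_i²`. -/
def ecoef (α : ℝ) (w : ℕ → ℕ → ℕ → ℝ) (n i s : ℕ) : ℝ :=
  ∑ j ∈ Finset.range n, ∑ k ∈ Finset.range n, ∑ t ∈ Finset.range n,
    edgeP α w n i j * edgeP α w n j k * edgeP α w n k i * edgeP α w n s t / (nu α w n i) ^ 2

/-- `σ_{1n}²`. -/
def sigma1sq (α : ℝ) (w : ℕ → ℕ → ℕ → ℝ) (n : ℕ) : ℝ :=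
  4 / (n : ℝ) ^ 2 * ∑ i ∈ Finset.range n, ∑ j ∈ Finset.Ioo i n, ∑ k ∈ Finset.Ioo j n,
    ((nu α w n i)⁻¹ + (nu α w n j)⁻¹ + (nu α w n k)⁻¹) ^ 2 *
      (edgeP α w n i j * (1 - edgeP α w n i j)) *
      (edgeP α w n j k * (1 - edgeP α w n j k)) *
      (edgeP α w n k i * (1 - edgeP α w n k i))

/-- `σ_{2n}²`. -/
def sigma2sq (α : ℝ) (w : ℕ → ℕ → ℕ → ℝ) (n : ℕ) : ℝ :=
  1 / (n : ℝ) ^ 2 * ∑ i ∈ Finset.range n, ∑ j ∈ Finset.Ioo i n,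
    (2 * bcoef α w n i j + 2 * ccoef α w n i j + 2 * ccoef α w n j i -
        (acoef α w n i + acoef α w n j) - (ecoef α w n i j + ecoef α w n j i)) ^ 2 *
      (edgeP α w n i j * (1 - edgeP α w n i j))

/-- `σ_n² = σ_{1n}² + σ_{2n}²`. -/
def sigmasq (α : ℝ) (w : ℕ → ℕ → ℕ → ℝ) (n : ℕ) : ℝ :=
  sigma1sq α w n + sigma2sq α w n

/-- Convergence in distribution to the standard normal law `N(0,1)`:
the integrals of every bounded continuous function converge. -/
def TendstoGaussian {Ω : ℕ → Type} [∀ n, MeasurableSpace (Ω n)]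
    (μ : ∀ n, Measure (Ω n)) (X : ∀ n, Ω n → ℝ) : Prop :=
  ∀ f : BoundedContinuousFunction ℝ ℝ,
    Tendsto (fun n => ∫ ω, f (X n ω) ∂μ n) atTop (nhds (∫ x, f x ∂gaussianReal 0 1))

/-- The constant weights of the homogeneous Erdős–Rényi graph `G_n(α)`. -/
def erW : ℕ → ℕ → ℕ → ℝ := fun _ i j => if i = j then 0 else 1

/-- `δ_n = (log (n p_n))^{-2}`. -/
def deltaN (α : ℝ) (n : ℕ) : ℝ := ((Real.log ((n : ℝ) * pn α n)) ^ 2)⁻¹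

/-- `ε_n = (log (n p_n))^{-5}`. -/
def epsN (α : ℝ) (n : ℕ) : ℝ := ((Real.log ((n : ℝ) * pn α n)) ^ 5)⁻¹

/-- `c_n = (log (n p_n))^{-1/2}`. -/
def cN (α : ℝ) (n : ℕ) : ℝ := (Real.sqrt (Real.log ((n : ℝ) * pn α n)))⁻¹

/-- The number of 2-paths emanating from `i`: `V_i = Σ_{j,k ∉ {i}} A_{ij} A_{jk}`. -/
def twoPaths {Ω : ℕ → Type} (A : ∀ n, ℕ → ℕ → Ω n → ℝ) (n i : ℕ) (ω : Ω n) : ℝ :=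
  ∑ j ∈ (Finset.range n).erase i, ∑ k ∈ (Finset.range n).erase i, A n i j ω * A n j k ω

/-- `Δ_i = Σ_{j ≠ k, j,k ≠ i} A_{ij} A_{jk} A_{ki}`, twice the number of triangles at `i`. -/
def triCount {Ω : ℕ → Type} (A : ∀ n, ℕ → ℕ → Ω n → ℝ) (n i : ℕ) (ω : Ω n) : ℝ :=
  ∑ j ∈ (Finset.range n).erase i, ∑ k ∈ ((Finset.range n).erase i).erase j,
    A n i j ω * A n j k ω * A n k i ω

/-- Degree of vertex `i`: `d_i = Σ_j A_{ij}`. -/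
def degree {Ω : ℕ → Type} (A : ∀ n, ℕ → ℕ → Ω n → ℝ) (n i : ℕ) (ω : Ω n) : ℝ :=
  ∑ j ∈ Finset.range n, A n i j ω

-- ===================== auxiliary lemmas =====================

lemma pn_pos {α : ℝ} {n : ℕ} (hn : 1 ≤ n) : 0 < pn α n :=
  Real.rpow_pos_of_pos (by exact_mod_cast hn) _

lemma G1 (n : ℕ) : ∑ i ∈ Finset.range n, (i : ℝ) = n * (n - 1) / 2 := by
  induction n with
  | zero => simp
  | succ n ih => rw [Finset.sum_range_succ, ih]; push_cast; ring

lemma G2 (n : ℕ) : ∑ i ∈ Finset.range n, (i : ℝ) ^ 2 = n * (n - 1) * (2 * n - 1) / 6 := by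
  induction n with
  | zero => simp
  | succ n ih => rw [Finset.sum_range_succ, ih]; push_cast; ring

lemma sum_lin' (m n : ℕ) :
    ∑ j ∈ Finset.range m, ((n : ℝ) - j - 1) = m * ((n : ℝ) - 1) - m * (m - 1) / 2 := by
  have h : ∀ j : ℕ, ((n : ℝ) - j - 1) = ((n : ℝ) - 1) - (j : ℝ) := fun j => by ring
  rw [Finset.sum_congr rfl fun j _ => h j, Finset.sum_sub_distrib, Finset.sum_const, G1,
    Finset.card_range, nsmul_eq_mul]

lemma sum_Ioo_lin {i n : ℕ} (hi : i < n) :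
    ∑ j ∈ Finset.Ioo i n, ((n : ℝ) - j - 1) =
      ((n : ℝ) - i - 1) * ((n : ℝ) - i - 2) / 2 := by
  rw [← Finset.Ico_add_one_left_eq_Ioo, Finset.sum_Ico_eq_sub _ (show i + 1 ≤ n from Nat.succ_le_of_lt hi), sum_lin', sum_lin']
  push_cast
  ring

lemma sum_quad (n : ℕ) :
    ∑ i ∈ Finset.range n, ((n : ℝ) - i - 1) * ((n : ℝ) - i - 2) / 2 =
      (n : ℝ) * ((n : ℝ) - 1) * ((n : ℝ) - 2) / 6 := by
  have h : ∀ i : ℕ, ((n : ℝ) - i - 1) * ((n : ℝ) - i - 2) / 2 =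
      (i : ℝ) ^ 2 / 2 - (2 * (n : ℝ) - 3) / 2 * i + ((n : ℝ) - 1) * ((n : ℝ) - 2) / 2 :=
    fun i => by ring
  rw [Finset.sum_congr rfl fun i _ => h i]
  rw [Finset.sum_add_distrib, Finset.sum_sub_distrib, ← Finset.sum_div, ← Finset.mul_sum,
    G1, G2, Finset.sum_const, Finset.card_range, nsmul_eq_mul]
  ring

lemma sum_Ioo_const {j n : ℕ} (hj : j < n) (c : ℝ) :
    ∑ _k ∈ Finset.Ioo j n, c = ((n : ℝ) - j - 1) * c := by
  rw [Finset.sum_const, Nat.card_Ioo, nsmul_eq_mul, Nat.sub_sub,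
    Nat.cast_sub (by omega : j + 1 ≤ n)]
  push_cast; ring

lemma tripleConst (n : ℕ) (c : ℝ) :
    ∑ i ∈ Finset.range n, ∑ j ∈ Finset.Ioo i n, ∑ _k ∈ Finset.Ioo j n, c =
      (n : ℝ) * ((n : ℝ) - 1) * ((n : ℝ) - 2) / 6 * c := by
  have h1 : ∀ i ∈ Finset.range n, ∑ j ∈ Finset.Ioo i n, ∑ _k ∈ Finset.Ioo j n, c =
      ((n : ℝ) - i - 1) * ((n : ℝ) - i - 2) / 2 * c := by
    intro i hi
    rw [Finset.sum_congr rfl fun j hj => sum_Ioo_const (Finset.mem_Ioo.mp hj).2 c,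
      ← Finset.sum_mul, sum_Ioo_lin (Finset.mem_range.mp hi)]
  rw [Finset.sum_congr rfl h1, ← Finset.sum_mul, sum_quad]

lemma pairConst (n : ℕ) (c : ℝ) :
    ∑ i ∈ Finset.range n, ∑ _j ∈ Finset.Ioo i n, c =
      (n : ℝ) * ((n : ℝ) - 1) / 2 * c := by
  rw [Finset.sum_congr rfl fun i hi => sum_Ioo_const (Finset.mem_range.mp hi) c,
    ← Finset.sum_mul, sum_lin']
  ring

lemma eSymm (α : ℝ) (n a b : ℕ) : edgeP α erW n a b = edgeP α erW n b a := by
  simp only [edgeP, erW]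
  congr 1
  exact if_congr eq_comm rfl rfl

lemma edgeP_ne {α : ℝ} {n i j : ℕ} (hij : i ≠ j) : edgeP α erW n i j = pn α n := by
  simp [edgeP, erW, hij]

lemma rowSum (α : ℝ) {n j : ℕ} (hj : j ∈ Finset.range n) :
    ∑ k ∈ Finset.range n, edgeP α erW n j k = pn α n * ((n : ℝ) - 1) := by
  have h : ∀ k : ℕ, edgeP α erW n j k =
      pn α n - (if j = k then pn α n else 0) := by
    intro k
    simp only [edgeP, erW]
    split_ifs <;> ring
  rw [Finset.sum_congr rfl fun k _ => h k, Finset.sum_sub_distrib, Finset.sum_const,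
    Finset.sum_ite_eq, if_pos hj, Finset.card_range, nsmul_eq_mul]
  ring

lemma nu_er (α : ℝ) {n i : ℕ} (hi : i ∈ Finset.range n) :
    nu α erW n i = (pn α n) ^ 2 * ((n : ℝ) - 1) ^ 2 := by
  unfold nu
  have key : ∀ j ∈ Finset.range n,
      ∑ k ∈ Finset.range n, edgeP α erW n i j * edgeP α erW n j k =
        edgeP α erW n i j * (pn α n * ((n : ℝ) - 1)) := by
    intro j hj
    rw [← Finset.mul_sum, rowSum α hj]
  rw [Finset.sum_congr rfl key, ← Finset.sum_mul, rowSum α hi]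
  ring

lemma pairSum (α : ℝ) {n i j : ℕ} (hi : i ∈ Finset.range n) (hj : j ∈ Finset.range n)
    (hij : i ≠ j) :
    ∑ k ∈ Finset.range n, edgeP α erW n i k * edgeP α erW n j k =
      (pn α n) ^ 2 * ((n : ℝ) - 2) := by
  have h : ∀ k : ℕ, edgeP α erW n i k * edgeP α erW n j k =
      (pn α n) ^ 2 - (if i = k then (pn α n) ^ 2 else 0)
        - (if j = k then (pn α n) ^ 2 else 0) := by
    intro k
    simp only [edgeP, erW]
    by_cases h1 : i = k <;> by_cases h2 : j = k
    · exact absurd (h1.trans h2.symm) hij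
    all_goals simp [h1, h2] <;> ring
  rw [Finset.sum_congr rfl fun k _ => h k, Finset.sum_sub_distrib, Finset.sum_sub_distrib,
    Finset.sum_const, Finset.sum_ite_eq, Finset.sum_ite_eq, if_pos hi, if_pos hj,
    Finset.card_range, nsmul_eq_mul]
  ring

lemma triSum (α : ℝ) {n i : ℕ} (hi : i ∈ Finset.range n) :
    ∑ j ∈ Finset.range n, ∑ k ∈ Finset.range n,
      edgeP α erW n i j * edgeP α erW n j k * edgeP α erW n k i =
      (pn α n) ^ 3 * ((n : ℝ) - 1) * ((n : ℝ) - 2) := by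
  have key : ∀ j ∈ Finset.range n,
      ∑ k ∈ Finset.range n, edgeP α erW n i j * edgeP α erW n j k * edgeP α erW n k i =
        edgeP α erW n i j * ((pn α n) ^ 2 * ((n : ℝ) - 2)) := by
    intro j hj
    by_cases hji : j = i
    · subst hji
      simp [edgeP, erW]
    · have h : ∀ k : ℕ, edgeP α erW n i j * edgeP α erW n j k * edgeP α erW n k i =
          edgeP α erW n i j * (edgeP α erW n j k * edgeP α erW n i k) := by
        intro k
        rw [eSymm α n k i]
        ring
      rw [Finset.sum_congr rfl fun k _ => h k, ← Finset.mul_sum, pairSum α hj hi hji]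
  rw [Finset.sum_congr rfl key, ← Finset.sum_mul, rowSum α hi]
  ring

lemma bcoef_er (α : ℝ) {n i j : ℕ} (hi : i ∈ Finset.range n) (hj : j ∈ Finset.range n)
    (hij : i ≠ j) :
    bcoef α erW n i j =
      (pn α n) ^ 2 * ((n : ℝ) - 2) / ((pn α n) ^ 2 * ((n : ℝ) - 1) ^ 2) := by
  unfold bcoef
  rw [Finset.sum_congr rfl fun k hk => by rw [nu_er α hk], ← Finset.sum_div,
    pairSum α hi hj hij]

lemma ccoef_er (α : ℝ) {n i j : ℕ} (hi : i ∈ Finset.range n) (hj : j ∈ Finset.range n)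
    (hij : i ≠ j) :
    ccoef α erW n i j =
      (pn α n) ^ 2 * ((n : ℝ) - 2) / ((pn α n) ^ 2 * ((n : ℝ) - 1) ^ 2) := by
  unfold ccoef
  rw [Finset.sum_congr rfl fun k _ => by rw [nu_er α hi], ← Finset.sum_div,
    pairSum α hi hj hij]

lemma acoef_er (α : ℝ) {n s : ℕ} (hs : s ∈ Finset.range n) :
    acoef α erW n s =
      (pn α n) ^ 4 * ((n : ℝ) - 1) ^ 2 * ((n : ℝ) - 2) /
        ((pn α n) ^ 2 * ((n : ℝ) - 1) ^ 2) ^ 2 := by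
  unfold acoef
  have key : ∀ i ∈ Finset.range n,
      ∑ j ∈ Finset.range n, ∑ k ∈ Finset.range n,
        edgeP α erW n i j * edgeP α erW n j k * edgeP α erW n k i * edgeP α erW n i s /
          (nu α erW n i) ^ 2 =
      edgeP α erW n i s *
        ((pn α n) ^ 3 * ((n : ℝ) - 1) * ((n : ℝ) - 2) /
          ((pn α n) ^ 2 * ((n : ℝ) - 1) ^ 2) ^ 2) := by
    intro i hi
    have h : ∀ j k : ℕ,
        edgeP α erW n i j * edgeP α erW n j k * edgeP α erW n k i * edgeP α erW n i s /
          (nu α erW n i) ^ 2 =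
        edgeP α erW n i j * edgeP α erW n j k * edgeP α erW n k i *
          (edgeP α erW n i s / ((pn α n) ^ 2 * ((n : ℝ) - 1) ^ 2) ^ 2) := by
      intro j k
      rw [nu_er α hi]
      ring
    rw [Finset.sum_congr rfl fun j _ => Finset.sum_congr rfl fun k _ => h j k]
    rw [Finset.sum_congr rfl fun j _ => (Finset.sum_mul ..).symm, ← Finset.sum_mul,
      triSum α hi]
    ring
  rw [Finset.sum_congr rfl key, ← Finset.sum_mul]
  rw [Finset.sum_congr rfl fun i _ => eSymm α n i s, rowSum α hs]
  ring

lemma ecoef_er (α : ℝ) {n i s : ℕ} (hi : i ∈ Finset.range n) (hs : s ∈ Finset.range n) :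
    ecoef α erW n i s =
      (pn α n) ^ 4 * ((n : ℝ) - 1) ^ 2 * ((n : ℝ) - 2) /
        ((pn α n) ^ 2 * ((n : ℝ) - 1) ^ 2) ^ 2 := by
  unfold ecoef
  have h : ∀ j k t : ℕ,
      edgeP α erW n i j * edgeP α erW n j k * edgeP α erW n k i * edgeP α erW n s t /
        (nu α erW n i) ^ 2 =
      edgeP α erW n i j * edgeP α erW n j k * edgeP α erW n k i *
        (edgeP α erW n s t / ((pn α n) ^ 2 * ((n : ℝ) - 1) ^ 2) ^ 2) := by
    intro j k t
    rw [nu_er α hi]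
    ring
  rw [Finset.sum_congr rfl fun j _ => Finset.sum_congr rfl fun k _ =>
    Finset.sum_congr rfl fun t _ => h j k t]
  have h2 : ∀ j ∈ Finset.range n, ∀ k ∈ Finset.range n,
      ∑ t ∈ Finset.range n, edgeP α erW n i j * edgeP α erW n j k * edgeP α erW n k i *
        (edgeP α erW n s t / ((pn α n) ^ 2 * ((n : ℝ) - 1) ^ 2) ^ 2) =
      edgeP α erW n i j * edgeP α erW n j k * edgeP α erW n k i *
        (pn α n * ((n : ℝ) - 1) / ((pn α n) ^ 2 * ((n : ℝ) - 1) ^ 2) ^ 2) := by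
    intro j _ k _
    rw [← Finset.mul_sum, ← Finset.sum_div, rowSum α hs]
  rw [Finset.sum_congr rfl fun j hj => Finset.sum_congr rfl fun k hk => h2 j hj k hk]
  rw [Finset.sum_congr rfl fun j _ => (Finset.sum_mul ..).symm, ← Finset.sum_mul,
    triSum α hi]
  ring

lemma bracket_er (α : ℝ) {n i j : ℕ} (hn : 2 ≤ n) (hi : i ∈ Finset.range n)
    (hj : j ∈ Finset.range n) (hij : i ≠ j) :
    2 * bcoef α erW n i j + 2 * ccoef α erW n i j + 2 * ccoef α erW n j i -
        (acoef α erW n i + acoef α erW n j) - (ecoef α erW n i j + ecoef α erW n j i) =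
      2 * ((n : ℝ) - 2) / ((n : ℝ) - 1) ^ 2 := by
  have hp : pn α n ≠ 0 := (pn_pos (by omega)).ne'
  have hn1 : ((n : ℝ) - 1) ≠ 0 := by
    have : (2 : ℝ) ≤ (n : ℝ) := by exact_mod_cast hn
    linarith
  rw [bcoef_er α hi hj hij, ccoef_er α hi hj hij, ccoef_er α hj hi (Ne.symm hij),
    acoef_er α hi, acoef_er α hj, ecoef_er α hi hj, ecoef_er α hj hi]
  field_simp
  ring

lemma sigma1_er (α : ℝ) {n : ℕ} (hn : 2 ≤ n) :
    sigma1sq α erW n =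
      6 * ((n : ℝ) - 2) * (1 - pn α n) ^ 3 / ((n : ℝ) * ((n : ℝ) - 1) ^ 3 * pn α n) := by
  have hp : pn α n ≠ 0 := (pn_pos (by omega)).ne'
  have hn0 : ((n : ℝ)) ≠ 0 := by
    have : (2 : ℝ) ≤ (n : ℝ) := by exact_mod_cast hn
    linarith
  have hn1 : ((n : ℝ) - 1) ≠ 0 := by
    have : (2 : ℝ) ≤ (n : ℝ) := by exact_mod_cast hn
    linarith
  unfold sigma1sq
  have key : ∀ i ∈ Finset.range n, ∀ j ∈ Finset.Ioo i n, ∀ k ∈ Finset.Ioo j n,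
      ((nu α erW n i)⁻¹ + (nu α erW n j)⁻¹ + (nu α erW n k)⁻¹) ^ 2 *
          (edgeP α erW n i j * (1 - edgeP α erW n i j)) *
          (edgeP α erW n j k * (1 - edgeP α erW n j k)) *
          (edgeP α erW n k i * (1 - edgeP α erW n k i)) =
      (3 * ((pn α n) ^ 2 * ((n : ℝ) - 1) ^ 2)⁻¹) ^ 2 * (pn α n * (1 - pn α n)) ^ 3 := by
    intro i hi j hj k hk
    obtain ⟨hij, hjn⟩ := Finset.mem_Ioo.mp hj
    obtain ⟨hjk, hkn⟩ := Finset.mem_Ioo.mp hk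
    have hjr : j ∈ Finset.range n := Finset.mem_range.mpr hjn
    have hkr : k ∈ Finset.range n := Finset.mem_range.mpr hkn
    rw [nu_er α hi, nu_er α hjr, nu_er α hkr, edgeP_ne (Nat.ne_of_lt hij),
      edgeP_ne (Nat.ne_of_lt hjk), edgeP_ne (Ne.symm (Nat.ne_of_lt (hij.trans hjk)))]
    ring
  rw [Finset.sum_congr rfl fun i hi => Finset.sum_congr rfl fun j hj =>
    Finset.sum_congr rfl fun k hk => key i hi j hj k hk, tripleConst]
  field_simp
  ring

lemma sigma2_er (α : ℝ) {n : ℕ} (hn : 2 ≤ n) :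
    sigma2sq α erW n =
      2 * ((n : ℝ) - 2) ^ 2 * pn α n * (1 - pn α n) / ((n : ℝ) * ((n : ℝ) - 1) ^ 3) := by
  have hp : pn α n ≠ 0 := (pn_pos (by omega)).ne'
  have hn0 : ((n : ℝ)) ≠ 0 := by
    have : (2 : ℝ) ≤ (n : ℝ) := by exact_mod_cast hn
    linarith
  have hn1 : ((n : ℝ) - 1) ≠ 0 := by
    have : (2 : ℝ) ≤ (n : ℝ) := by exact_mod_cast hn
    linarith
  unfold sigma2sq
  have key : ∀ i ∈ Finset.range n, ∀ j ∈ Finset.Ioo i n,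
      (2 * bcoef α erW n i j + 2 * ccoef α erW n i j + 2 * ccoef α erW n j i -
          (acoef α erW n i + acoef α erW n j) - (ecoef α erW n i j + ecoef α erW n j i)) ^ 2 *
        (edgeP α erW n i j * (1 - edgeP α erW n i j)) =
      (2 * ((n : ℝ) - 2) / ((n : ℝ) - 1) ^ 2) ^ 2 * (pn α n * (1 - pn α n)) := by
    intro i hi j hj
    obtain ⟨hij, hjn⟩ := Finset.mem_Ioo.mp hj
    have hjr : j ∈ Finset.range n := Finset.mem_range.mpr hjn
    rw [bracket_er α hn hi hjr (Nat.ne_of_lt hij), edgeP_ne (Nat.ne_of_lt hij)]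
  rw [Finset.sum_congr rfl fun i hi => Finset.sum_congr rfl fun j hj => key i hi j hj,
    pairConst]
  field_simp

lemma tendsto_shift_inv (b : ℝ) :
    Tendsto (fun n : ℕ => ((n : ℝ) + b)⁻¹) atTop (nhds 0) :=
  tendsto_inv_atTop_zero.comp
    (tendsto_atTop_add_const_right atTop b tendsto_natCast_atTop_atTop)

lemma tendsto_ratio (a b : ℝ) :
    Tendsto (fun n : ℕ => ((n : ℝ) + a) / ((n : ℝ) + b)) atTop (nhds 1) := by
  have h0 : Tendsto (fun n : ℕ => 1 + (a - b) * ((n : ℝ) + b)⁻¹) atTop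
      (nhds (1 + (a - b) * 0)) :=
    tendsto_const_nhds.add ((tendsto_shift_inv b).const_mul _)
  rw [mul_zero, add_zero] at h0
  refine h0.congr' ?_
  have hb : ∀ᶠ n : ℕ in atTop, (0 : ℝ) < (n : ℝ) + b :=
    (tendsto_atTop_add_const_right atTop b tendsto_natCast_atTop_atTop).eventually_gt_atTop 0
  filter_upwards [hb] with n hn
  field_simp
  ring

lemma tendsto_ratio₁ : Tendsto (fun n : ℕ => ((n : ℝ) - 2) / ((n : ℝ) - 1)) atTop (nhds 1) := by
  simpa [sub_eq_add_neg] using tendsto_ratio (-2) (-1)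

lemma tendsto_ratio₂ : Tendsto (fun n : ℕ => (n : ℝ) / ((n : ℝ) - 1)) atTop (nhds 1) := by
  simpa [sub_eq_add_neg] using tendsto_ratio 0 (-1)

lemma tendsto_npow_neg {β : ℝ} (hβ : β < 0) :
    Tendsto (fun n : ℕ => (n : ℝ) ^ β) atTop (nhds 0) := by
  have := (tendsto_rpow_neg_atTop (neg_pos.mpr hβ)).comp tendsto_natCast_atTop_atTop
  simpa [neg_neg, Function.comp_def] using this

lemma tendsto_one_sub_pn {α : ℝ} (hα : 0 < α) :
    Tendsto (fun n : ℕ => 1 - pn α n) atTop (nhds 1) := by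
  have hp : Tendsto (fun n : ℕ => pn α n) atTop (nhds 0) := by
    simpa [pn] using tendsto_npow_neg (neg_neg_iff_pos.mpr hα : -α < 0)
  simpa using tendsto_const_nhds.sub hp

lemma case_gt {α : ℝ} (hα : α ∈ Set.Ioo (0:ℝ) 1) (h : 1/2 < α) :
    Tendsto (fun n => sigmasq α erW n / (6 / (n : ℝ) ^ ((3:ℝ) - α))) atTop (nhds 1) := by
  have hA : Tendsto (fun n : ℕ =>
      (1 - pn α n) ^ 3 * (((n:ℝ) - 2) / ((n:ℝ) - 1)) * ((n:ℝ) / ((n:ℝ) - 1)) ^ 2)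
      atTop (nhds ((1:ℝ) ^ 3 * 1 * 1 ^ 2)) :=
    (((tendsto_one_sub_pn hα.1).pow 3).mul tendsto_ratio₁).mul (tendsto_ratio₂.pow 2)
  have hB : Tendsto (fun n : ℕ =>
      1 / 3 * (1 - pn α n) * (((n:ℝ) - 2) / ((n:ℝ) - 1)) ^ 2 * ((n:ℝ) / ((n:ℝ) - 1)) *
        ((n:ℝ) ^ ((1:ℝ) - 2 * α)))
      atTop (nhds (1 / 3 * 1 * 1 ^ 2 * 1 * 0)) :=
    (((((tendsto_one_sub_pn hα.1).const_mul (1/3)).mul (tendsto_ratio₁.pow 2)).mul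
      tendsto_ratio₂).mul (tendsto_npow_neg (by linarith : (1:ℝ) - 2 * α < 0)))
  have hsum := hA.add hB
  rw [show ((1:ℝ) ^ 3 * 1 * 1 ^ 2 + 1 / 3 * 1 * 1 ^ 2 * 1 * 0) = 1 by norm_num] at hsum
  refine hsum.congr' ?_
  filter_upwards [eventually_ge_atTop 2] with n hn
  have hx2 : (2:ℝ) ≤ (n:ℝ) := by exact_mod_cast hn
  have hx0 : (0:ℝ) < (n:ℝ) := by linarith
  have hq0 : 0 < pn α n := pn_pos (by omega)
  have hn1 : ((n:ℝ) - 1) ≠ 0 := by linarith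
  have h3 : (n:ℝ) ^ ((3:ℝ) - α) = (n:ℝ) ^ 3 * pn α n := by
    simp only [pn]
    rw [show (3:ℝ) - α = ((3:ℕ):ℝ) + (-α) by push_cast; ring, Real.rpow_add hx0,
      Real.rpow_natCast]
  have h1 : (n:ℝ) ^ ((1:ℝ) - 2 * α) = (n:ℝ) * (pn α n) ^ 2 := by
    simp only [pn]
    rw [show (1:ℝ) - 2 * α = 1 + (-α + -α) by ring, Real.rpow_add hx0, Real.rpow_add hx0,
      Real.rpow_one]
    ring
  rw [sigmasq, sigma1_er α hn, sigma2_er α hn, h3, h1]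
  field_simp
  ring

lemma case_lt {α : ℝ} (hα : α ∈ Set.Ioo (0:ℝ) 1) (h : α < 1/2) :
    Tendsto (fun n => sigmasq α erW n / (2 / (n : ℝ) ^ ((2:ℝ) + α))) atTop (nhds 1) := by
  have hA : Tendsto (fun n : ℕ =>
      3 * (1 - pn α n) ^ 3 * (((n:ℝ) - 2) / ((n:ℝ) - 1)) * ((n:ℝ) / ((n:ℝ) - 1)) ^ 2 *
        ((n:ℝ) ^ (2 * α - 1)))
      atTop (nhds (3 * (1:ℝ) ^ 3 * 1 * 1 ^ 2 * 0)) :=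
    (((((tendsto_one_sub_pn hα.1).pow 3).const_mul 3).mul tendsto_ratio₁).mul
      (tendsto_ratio₂.pow 2)).mul (tendsto_npow_neg (by linarith : 2 * α - 1 < 0))
  have hB : Tendsto (fun n : ℕ =>
      (1 - pn α n) * (((n:ℝ) - 2) / ((n:ℝ) - 1)) ^ 2 * ((n:ℝ) / ((n:ℝ) - 1)))
      atTop (nhds ((1:ℝ) * 1 ^ 2 * 1)) :=
    ((tendsto_one_sub_pn hα.1).mul (tendsto_ratio₁.pow 2)).mul tendsto_ratio₂
  have hsum := hA.add hB
  rw [show (3 * (1:ℝ) ^ 3 * 1 * 1 ^ 2 * 0 + (1:ℝ) * 1 ^ 2 * 1) = 1 by norm_num] at hsum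
  refine hsum.congr' ?_
  filter_upwards [eventually_ge_atTop 2] with n hn
  have hx2 : (2:ℝ) ≤ (n:ℝ) := by exact_mod_cast hn
  have hx0 : (0:ℝ) < (n:ℝ) := by linarith
  have hq0 : 0 < pn α n := pn_pos (by omega)
  have hn1 : ((n:ℝ) - 1) ≠ 0 := by linarith
  have h2a : (n:ℝ) ^ ((2:ℝ) + α) = (n:ℝ) ^ 2 * (pn α n)⁻¹ := by
    simp only [pn]
    rw [show (2:ℝ) + α = ((2:ℕ):ℝ) + α by push_cast; ring, Real.rpow_add hx0,
      Real.rpow_natCast, Real.rpow_neg hx0.le, inv_inv]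
  have h21 : (n:ℝ) ^ (2 * α - 1) = ((n:ℝ) * (pn α n) ^ 2)⁻¹ := by
    simp only [pn]
    rw [show 2 * α - 1 = -(1 + (-α + -α)) by ring, Real.rpow_neg hx0.le, Real.rpow_add hx0,
      Real.rpow_add hx0, Real.rpow_one]
    ring
  rw [sigmasq, sigma1_er α hn, sigma2_er α hn, h2a, h21]
  field_simp
  ring

lemma case_eq :
    Tendsto (fun n => sigmasq (1/2) erW n / (8 / ((n : ℝ) ^ 2 * Real.sqrt n)))
      atTop (nhds 1) := by
  have hhalf : (0:ℝ) < 1/2 := by norm_num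
  have hA : Tendsto (fun n : ℕ =>
      3 / 4 * (1 - pn (1/2) n) ^ 3 * (((n:ℝ) - 2) / ((n:ℝ) - 1)) * ((n:ℝ) / ((n:ℝ) - 1)) ^ 2)
      atTop (nhds (3 / 4 * (1:ℝ) ^ 3 * 1 * 1 ^ 2)) :=
    ((((tendsto_one_sub_pn hhalf).pow 3).const_mul (3/4)).mul tendsto_ratio₁).mul
      (tendsto_ratio₂.pow 2)
  have hB : Tendsto (fun n : ℕ =>
      1 / 4 * (1 - pn (1/2) n) * (((n:ℝ) - 2) / ((n:ℝ) - 1)) ^ 2 * ((n:ℝ) / ((n:ℝ) - 1)))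
      atTop (nhds (1 / 4 * (1:ℝ) * 1 ^ 2 * 1)) :=
    (((tendsto_one_sub_pn hhalf).const_mul (1/4)).mul (tendsto_ratio₁.pow 2)).mul
      tendsto_ratio₂
  have hsum := hA.add hB
  rw [show (3 / 4 * (1:ℝ) ^ 3 * 1 * 1 ^ 2 + 1 / 4 * (1:ℝ) * 1 ^ 2 * 1) = 1 by norm_num] at hsum
  refine hsum.congr' ?_
  filter_upwards [eventually_ge_atTop 2] with n hn
  have hx2 : (2:ℝ) ≤ (n:ℝ) := by exact_mod_cast hn
  have hx0 : (0:ℝ) < (n:ℝ) := by linarith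
  have hy0 : 0 < Real.sqrt (n:ℝ) := Real.sqrt_pos.mpr hx0
  have hqy : pn (1/2) n = (Real.sqrt (n:ℝ))⁻¹ := by
    rw [show pn (1/2:ℝ) n = ((n:ℝ)) ^ (-(1/2:ℝ)) from rfl, Real.rpow_neg hx0.le,
      ← Real.sqrt_eq_rpow]
  rw [sigmasq, sigma1_er (1/2) hn, sigma2_er (1/2) hn, hqy]
  set y := Real.sqrt (n:ℝ) with hy
  have hyx : (n:ℝ) = y ^ 2 := (Real.sq_sqrt hx0.le).symm
  rw [hyx]
  have hy2 : (2:ℝ) ≤ y ^ 2 := by rw [← hyx]; exact hx2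
  have hy1 : y ^ 2 - 1 ≠ 0 := by nlinarith
  have hyne : y ≠ 0 := ne_of_gt hy0
  field_simp
  ring

/-- Phase transition of the variance `σ_n² = σ_{1n}² + σ_{2n}²` of the
average closure coefficient of `G_n(α)` at `α = 1/2`, together with the discontinuity of
the leading constant at `α = 1/2`. -/
theorem er_variance_phase_transition (α : ℝ) (hα : α ∈ Set.Ioo (0 : ℝ) 1) :
    ((1 / 2 : ℝ) < α →
      Tendsto (fun n => sigmasq α erW n / (6 / (n : ℝ) ^ ((3 : ℝ) - α))) atTop (nhds 1)) ∧
    (α = 1 / 2 →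
      Tendsto (fun n => sigmasq α erW n / (8 / ((n : ℝ) ^ 2 * Real.sqrt n))) atTop (nhds 1)) ∧
    (α < 1 / 2 →
      Tendsto (fun n => sigmasq α erW n / (2 / (n : ℝ) ^ ((2 : ℝ) + α))) atTop (nhds 1)) ∧
    (∀ n : ℕ, 2 ≤ n →
      Tendsto (fun a : ℝ => 2 / (n : ℝ) ^ ((2 : ℝ) + a)) (nhdsWithin (1 / 2) (Set.Iio (1 / 2)))
        (nhds (2 / ((n : ℝ) ^ 2 * Real.sqrt n))) ∧
      Tendsto (fun a : ℝ => 6 / (n : ℝ) ^ ((3 : ℝ) - a)) (nhdsWithin (1 / 2) (Set.Ioi (1 / 2)))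
        (nhds (6 / ((n : ℝ) ^ 2 * Real.sqrt n))) ∧
      2 / ((n : ℝ) ^ 2 * Real.sqrt n) ≠ 8 / ((n : ℝ) ^ 2 * Real.sqrt n) ∧
      6 / ((n : ℝ) ^ 2 * Real.sqrt n) ≠ 8 / ((n : ℝ) ^ 2 * Real.sqrt n)) := by
  refine ⟨fun h => case_gt hα h, fun h => by subst h; exact case_eq,
    fun h => case_lt hα h, ?_⟩
  intro n hn
  have hx2 : (2:ℝ) ≤ (n:ℝ) := by exact_mod_cast hn
  have hx0 : (0:ℝ) < (n:ℝ) := by linarith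
  have hs0 : 0 < Real.sqrt (n:ℝ) := Real.sqrt_pos.mpr hx0
  have hc0 : 0 < (n:ℝ) ^ 2 * Real.sqrt (n:ℝ) := by positivity
  have hval : (n:ℝ) ^ ((2:ℝ) + (1/2:ℝ)) = (n:ℝ) ^ 2 * Real.sqrt (n:ℝ) := by
    rw [show (2:ℝ) + (1/2:ℝ) = ((2:ℕ):ℝ) + (1/2:ℝ) by push_cast; ring, Real.rpow_add hx0,
      Real.rpow_natCast, ← Real.sqrt_eq_rpow]
  have hval2 : (n:ℝ) ^ ((3:ℝ) - (1/2:ℝ)) = (n:ℝ) ^ 2 * Real.sqrt (n:ℝ) := by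
    rw [show (3:ℝ) - (1/2:ℝ) = ((2:ℕ):ℝ) + (1/2:ℝ) by push_cast; ring, Real.rpow_add hx0,
      Real.rpow_natCast, ← Real.sqrt_eq_rpow]
  refine ⟨?_, ?_, ?_, ?_⟩
  · have hc : Continuous (fun a : ℝ => 2 / (n:ℝ) ^ ((2:ℝ) + a)) := by
      have hfun : (fun a : ℝ => 2 / (n:ℝ) ^ ((2:ℝ) + a)) =
          fun a => 2 / Real.exp (Real.log (n:ℝ) * ((2:ℝ) + a)) :=
        funext fun a => by rw [Real.rpow_def_of_pos hx0]
      rw [hfun]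
      exact continuous_const.div
        (Real.continuous_exp.comp (continuous_const.mul (continuous_const.add continuous_id)))
        (fun a => (Real.exp_pos _).ne')
    have h0 : ((2:ℝ) / ((n:ℝ) ^ 2 * Real.sqrt (n:ℝ))) =
        (fun a : ℝ => 2 / (n:ℝ) ^ ((2:ℝ) + a)) (1/2) := by
      show (2:ℝ) / _ = 2 / (n:ℝ) ^ ((2:ℝ) + (1/2:ℝ))
      rw [hval]
    rw [h0]
    exact (hc.tendsto _).mono_left nhdsWithin_le_nhds
  · have hc : Continuous (fun a : ℝ => 6 / (n:ℝ) ^ ((3:ℝ) - a)) := by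
      have hfun : (fun a : ℝ => 6 / (n:ℝ) ^ ((3:ℝ) - a)) =
          fun a => 6 / Real.exp (Real.log (n:ℝ) * ((3:ℝ) - a)) :=
        funext fun a => by rw [Real.rpow_def_of_pos hx0]
      rw [hfun]
      exact continuous_const.div
        (Real.continuous_exp.comp (continuous_const.mul (continuous_const.sub continuous_id)))
        (fun a => (Real.exp_pos _).ne')
    have h0 : ((6:ℝ) / ((n:ℝ) ^ 2 * Real.sqrt (n:ℝ))) =
        (fun a : ℝ => 6 / (n:ℝ) ^ ((3:ℝ) - a)) (1/2) := by
      show (6:ℝ) / _ = 6 / (n:ℝ) ^ ((3:ℝ) - (1/2:ℝ))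
      rw [hval2]
    rw [h0]
    exact (hc.tendsto _).mono_left nhdsWithin_le_nhds
  · intro h
    rw [div_eq_div_iff hc0.ne' hc0.ne'] at h
    nlinarith
  · intro h
    rw [div_eq_div_iff hc0.ne' hc0.ne'] at h
    nlinarith
end
end

section
/- Let G_n(α,β,W) be the heterogeneous Erdős–Rényi random graph, let δ_n = (log(np_n))^{−2}, and let M be a constant with M > e²/(1−p_nβ). For any vertex i, the degree d_i = Σ_{j=1}^n A_{ij} satisfies: P(d_i = k) ≤ exp(−np_nβ(1+o(1))) uniformly for all integers k ≤ δ_n n p_n, and P(d_i = k) ≤ exp(−np_nβ(1+o(1))) uniformly for all integers k ≥ M n p_n. Precisely: for every ε ∈ (0,1) there is N such that for all n ≥ N, every i ∈ [n], and every such k, P(d_i = k) ≤ exp(−(1−ε) n p_n β). -/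
open MeasureTheory ProbabilityTheory Finset Filter

noncomputable section

/-! ### Auxiliary lemmas for the degree tail bound -/

private def epair (i j : ℕ) : {q : ℕ × ℕ // q.1 < q.2} :=
  if h : i < j then ⟨(i, j), h⟩ else if h' : j < i then ⟨(j, i), h'⟩ else ⟨(0, 1), Nat.zero_lt_one⟩

private lemma epair_lt {i j : ℕ} (h : i < j) : epair i j = ⟨(i, j), h⟩ := dif_pos h

private lemma epair_gt {i j : ℕ} (h : j < i) : epair i j = ⟨(j, i), h⟩ := by
  rw [epair, dif_neg (by omega), dif_pos h]

private lemma epair_inj {i x y : ℕ} (hx : x ≠ i) (hy : y ≠ i) (h : epair i x = epair i y) :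
    x = y := by
  unfold epair at h
  split_ifs at h <;>
    simp only [Subtype.mk.injEq, Prod.mk.injEq] at h <;> omega

/-- Probability of an intersection of edge events at a fixed vertex `i` factorizes. -/
private lemma meas_inter_eq {Ω : ℕ → Type} [∀ n, MeasurableSpace (Ω n)] {α β : ℝ}
    {μ : ∀ n, Measure (Ω n)} {w : ℕ → ℕ → ℕ → ℝ} {A : ∀ n, ℕ → ℕ → Ω n → ℝ}
    (hm : IsHeterER α β μ w A) (n i : ℕ) (F : Finset ℕ) (hiF : i ∉ F) (v : ℕ → ℝ) :
    μ n (⋂ j ∈ F, {ω | A n i j ω = v j}) = ∏ j ∈ F, μ n {ω | A n i j ω = v j} := by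
  classical
  set sets : {q : ℕ × ℕ // q.1 < q.2} → Set (Ω n) := fun q =>
    (fun ω => A n q.1.1 q.1.2 ω) ⁻¹' {v (if q.1.1 = i then q.1.2 else q.1.1)} with hsets
  have hset : ∀ j ∈ F, sets (epair i j) = {ω | A n i j ω = v j} := by
    intro j hj
    have hji : j ≠ i := fun h => hiF (h ▸ hj)
    rcases lt_or_gt_of_ne hji with hlt | hgt
    · rw [epair_gt hlt, hsets]
      ext ω
      simp only [Set.mem_preimage, Set.mem_singleton_iff, Set.mem_setOf_eq]
      rw [if_neg hji, hm.A_symm n j i ω]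
    · rw [epair_lt hgt, hsets]
      ext ω
      simp [Set.mem_preimage]
  have hEeq : (⋂ j ∈ F, {ω | A n i j ω = v j}) = ⋂ q ∈ F.image (epair i), sets q := by
    ext ω
    simp only [Set.mem_iInter, Finset.mem_image]
    constructor
    · rintro h q ⟨j, hj, rfl⟩
      rw [hset j hj]
      exact h j hj
    · intro h j hj
      rw [← hset j hj]
      exact h _ ⟨j, hj, rfl⟩
  have hindep := (hm.A_indep n).meas_biInter
    (S := F.image (epair i)) (s := sets)
    (fun q _ => ⟨{v (if q.1.1 = i then q.1.2 else q.1.1)}, measurableSet_singleton _, rfl⟩)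
  have hinj : ∀ x ∈ F, ∀ y ∈ F, epair i x = epair i y → x = y := by
    intro x hx y hy h
    exact epair_inj (fun hc => hiF (by rwa [hc] at hx)) (fun hc => hiF (by rwa [hc] at hy)) h
  rw [hEeq, hindep, Finset.prod_image hinj]
  exact Finset.prod_congr rfl fun j hj => by rw [hset j hj]

/-- The complementary edge probability. -/
private lemma meas_eq_zero {Ω : ℕ → Type} [∀ n, MeasurableSpace (Ω n)] {α β : ℝ}
    {μ : ∀ n, Measure (Ω n)} {w : ℕ → ℕ → ℕ → ℝ} {A : ∀ n, ℕ → ℕ → Ω n → ℝ}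
    (hm : IsHeterER α β μ w A) {n i j : ℕ} (hi : i ∈ Finset.range n) (hj : j ∈ Finset.range n)
    (hij : i ≠ j) :
    μ n {ω | A n i j ω = 0} = 1 - ENNReal.ofReal (edgeP α w n i j) := by
  haveI := hm.prob n
  have hc : {ω | A n i j ω = (0 : ℝ)} = {ω | A n i j ω = (1 : ℝ)}ᶜ := by
    ext ω
    simp only [Set.mem_setOf_eq, Set.mem_compl_iff]
    constructor
    · intro h h1
      rw [h] at h1
      norm_num at h1
    · intro h
      rcases hm.A_vals n i j ω with h0 | h1
      · exact h0
      · exact absurd h1 h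
  have hms : MeasurableSet {ω | A n i j ω = (1 : ℝ)} :=
    hm.A_meas n i j (measurableSet_singleton (1 : ℝ))
  rw [hc, prob_compl_eq_one_sub hms, hm.A_prob n i hi j hj hij]

/-- The basic counting bound: `P(d_i = k) ≤ C(n-1,k) p^k (1-pβ)^(n-1-k)`. -/
private lemma degree_count_bound {Ω : ℕ → Type} [∀ n, MeasurableSpace (Ω n)] {α β : ℝ}
    {μ : ∀ n, Measure (Ω n)} {w : ℕ → ℕ → ℕ → ℝ} {A : ∀ n, ℕ → ℕ → Ω n → ℝ}
    (hm : IsHeterER α β μ w A) (n i : ℕ) (hi : i ∈ Finset.range n) (k : ℕ) :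
    μ n {ω | degree A n i ω = (k : ℝ)} ≤
      ENNReal.ofReal ((((n - 1).choose k : ℕ) : ℝ) * pn α n ^ k *
        (1 - pn α n * β) ^ (n - 1 - k)) := by
  classical
  haveI := hm.prob n
  have hn : 1 ≤ n := Nat.one_le_iff_ne_zero.mpr (by rintro rfl; simp at hi)
  have hα := hm.alpha_mem
  have hβ := hm.beta_mem
  set p := pn α n with hpdef
  have hnpos : (0 : ℝ) < n := by exact_mod_cast hn
  have hppos : 0 < p := Real.rpow_pos_of_pos hnpos _
  have hp1 : p ≤ 1 :=
    Real.rpow_le_one_of_one_le_of_nonpos (by exact_mod_cast hn) (by linarith [hα.1])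
  have hpβ1 : p * β ≤ 1 := by nlinarith [hβ.1, hβ.2]
  set F := (Finset.range n).erase i with hFdef
  have hiF : i ∉ F := Finset.notMem_erase i _
  have hcardF : F.card = n - 1 := by rw [hFdef, Finset.card_erase_of_mem hi, Finset.card_range]
  set E : Finset ℕ → Set (Ω n) := fun S =>
    ⋂ j ∈ F, {ω | A n i j ω = if j ∈ S then (1 : ℝ) else 0} with hEdef
  -- Step 1: inclusion into the union
  have hsub : {ω | degree A n i ω = (k : ℝ)} ⊆ ⋃ S ∈ F.powersetCard k, E S := by
    intro ω hω
    set S := F.filter (fun j => A n i j ω = 1) with hSdef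
    have hdeg : degree A n i ω = (S.card : ℝ) := by
      rw [degree, ← Finset.sum_erase (Finset.range n) (hm.A_diag n i ω)]
      rw [show ∑ j ∈ F, A n i j ω = ∑ j ∈ F, (if A n i j ω = 1 then (1 : ℝ) else 0) from
        Finset.sum_congr rfl fun j _ => by
          rcases hm.A_vals n i j ω with h | h <;> simp [h]]
      rw [Finset.sum_boole, hSdef]
    have hScard : S.card = k := by
      have : (S.card : ℝ) = (k : ℝ) := by rw [← hdeg]; exact hω
      exact_mod_cast this
    refine Set.mem_iUnion₂.mpr ⟨S, ?_, ?_⟩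
    · exact Finset.mem_powersetCard.mpr ⟨Finset.filter_subset _ _, hScard⟩
    · refine Set.mem_iInter₂.mpr fun j hj => ?_
      by_cases hjS : j ∈ S
      · have := (Finset.mem_filter.mp hjS).2
        simp only [Set.mem_setOf_eq, if_pos hjS, this]
      · have hA0 : A n i j ω = 0 := by
          rcases hm.A_vals n i j ω with h0 | h1
          · exact h0
          · exact absurd (Finset.mem_filter.mpr ⟨hj, h1⟩) hjS
        simp only [Set.mem_setOf_eq, if_neg hjS, hA0]
  -- Step 2: each event bound
  have hES : ∀ S ∈ F.powersetCard k, μ n (E S) ≤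
      ENNReal.ofReal p ^ k * (1 - ENNReal.ofReal (p * β)) ^ (n - 1 - k) := by
    intro S hS
    obtain ⟨hSsub, hScard⟩ := Finset.mem_powersetCard.mp hS
    rw [hEdef]
    rw [meas_inter_eq hm n i F hiF (fun j => if j ∈ S then (1 : ℝ) else 0)]
    have hfac : ∀ j ∈ F, μ n {ω | A n i j ω = if j ∈ S then (1 : ℝ) else 0} ≤
        (if j ∈ S then ENNReal.ofReal p else 1 - ENNReal.ofReal (p * β)) := by
      intro j hj
      have hjr : j ∈ Finset.range n := Finset.mem_of_mem_erase hj
      have hji : i ≠ j := fun h => (Finset.ne_of_mem_erase hj) h.symm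
      have hw := hm.w_mem n i hi j hjr hji
      have hedge_le : edgeP α w n i j ≤ p := by
        rw [edgeP]
        nlinarith [hw.2]
      have hedge_ge : p * β ≤ edgeP α w n i j := by
        rw [edgeP]
        nlinarith [hw.1]
      by_cases hjS : j ∈ S
      · simp only [if_pos hjS]
        rw [hm.A_prob n i hi j hjr hji]
        exact ENNReal.ofReal_le_ofReal hedge_le
      · simp only [if_neg hjS]
        rw [meas_eq_zero hm hi hjr hji]
        exact tsub_le_tsub_left (ENNReal.ofReal_le_ofReal hedge_ge) 1
    calc ∏ j ∈ F, μ n {ω | A n i j ω = if j ∈ S then (1 : ℝ) else 0}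
        ≤ ∏ j ∈ F, (if j ∈ S then ENNReal.ofReal p else 1 - ENNReal.ofReal (p * β)) :=
          Finset.prod_le_prod' hfac
      _ = (∏ j ∈ F \ S, (if j ∈ S then ENNReal.ofReal p else 1 - ENNReal.ofReal (p * β))) *
            ∏ j ∈ S, (if j ∈ S then ENNReal.ofReal p else 1 - ENNReal.ofReal (p * β)) :=
          (Finset.prod_sdiff hSsub).symm
      _ = (1 - ENNReal.ofReal (p * β)) ^ (F \ S).card * ENNReal.ofReal p ^ S.card := by
          rw [Finset.prod_congr rfl (fun j hj => if_neg (Finset.mem_sdiff.mp hj).2),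
            Finset.prod_congr rfl (fun j hj => if_pos hj), Finset.prod_const,
            Finset.prod_const]
      _ = ENNReal.ofReal p ^ k * (1 - ENNReal.ofReal (p * β)) ^ (n - 1 - k) := by
          rw [Finset.card_sdiff_of_subset hSsub, hcardF, hScard, mul_comm]
  -- Step 3: union bound and conversion
  calc μ n {ω | degree A n i ω = (k : ℝ)}
      ≤ μ n (⋃ S ∈ F.powersetCard k, E S) := measure_mono hsub
    _ ≤ ∑ S ∈ F.powersetCard k, μ n (E S) := measure_biUnion_finset_le _ _
    _ ≤ ∑ _S ∈ F.powersetCard k,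
          (ENNReal.ofReal p ^ k * (1 - ENNReal.ofReal (p * β)) ^ (n - 1 - k)) :=
        Finset.sum_le_sum hES
    _ = (((n - 1).choose k : ℕ) : ENNReal) * (ENNReal.ofReal p ^ k *
          (1 - ENNReal.ofReal (p * β)) ^ (n - 1 - k)) := by
        rw [Finset.sum_const, Finset.card_powersetCard, hcardF, nsmul_eq_mul]
    _ = ENNReal.ofReal ((((n - 1).choose k : ℕ) : ℝ) * p ^ k * (1 - p * β) ^ (n - 1 - k)) := by
        have h1 : ENNReal.ofReal (1 - p * β) = 1 - ENNReal.ofReal (p * β) := by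
          rw [ENNReal.ofReal_sub 1 (mul_nonneg hppos.le hβ.1.le), ENNReal.ofReal_one]
        have h2 : (0:ℝ) ≤ 1 - p * β := by nlinarith
        have hofp : ENNReal.ofReal (p ^ k) = ENNReal.ofReal p ^ k :=
          ENNReal.ofReal_pow hppos.le k
        have hofq : ENNReal.ofReal ((1 - p * β) ^ (n - 1 - k)) =
            (1 - ENNReal.ofReal (p * β)) ^ (n - 1 - k) := by
          rw [ENNReal.ofReal_pow h2, h1]
        rw [ENNReal.ofReal_mul (mul_nonneg (Nat.cast_nonneg ((n - 1).choose k))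
            (pow_nonneg hppos.le k)),
          ENNReal.ofReal_mul (Nat.cast_nonneg ((n - 1).choose k)), hofp, hofq,
          ENNReal.ofReal_natCast]
        ring

/-- Real-number bound for the small-`k` regime. -/
private lemma real_small {n k : ℕ} {p βv ε : ℝ} (hn : 1 ≤ n) (hp : 0 < p) (hp1 : p ≤ 1)
    (hβ : 0 < βv) (hβ1 : βv ≤ 1)
    (hL : 1 ≤ Real.log ((n : ℝ) * p))
    (hcond : (n : ℝ) * p * (Real.log ((n : ℝ) * p))⁻¹ +
      (n : ℝ) * p * ((Real.log ((n : ℝ) * p)) ^ 2)⁻¹ + 1 ≤ ε * ((n : ℝ) * p * βv))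
    (hk : (k : ℝ) ≤ ((Real.log ((n : ℝ) * p)) ^ 2)⁻¹ * ((n : ℝ) * p)) :
    (((n - 1).choose k : ℕ) : ℝ) * p ^ k * (1 - p * βv) ^ (n - 1 - k) ≤
      Real.exp (-((1 - ε) * ((n : ℝ) * p) * βv)) := by
  set x : ℝ := (n : ℝ) * p with hxdef
  set L : ℝ := Real.log x with hLdef
  have hnpos : (0 : ℝ) < n := by exact_mod_cast hn
  have hx : 0 < x := by positivity
  have hLpos : 0 < L := by linarith
  have hpβ : 0 ≤ 1 - p * βv := by nlinarith
  by_cases hkn : k ≤ n - 1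
  · have hm : ((n - 1 - k : ℕ) : ℝ) = (n : ℝ) - 1 - (k : ℝ) := by
      rw [Nat.cast_sub hkn, Nat.cast_sub hn, Nat.cast_one]
    have hC : (((n - 1).choose k : ℕ) : ℝ) ≤ (n : ℝ) ^ k := by
      have h1 : ((n - 1).choose k : ℕ) ≤ (n : ℕ) ^ k :=
        le_trans (Nat.choose_le_pow (n - 1) k) (Nat.pow_le_pow_left (Nat.sub_le n 1) k)
      exact_mod_cast h1
    have hb1 : (((n - 1).choose k : ℕ) : ℝ) * p ^ k ≤ x ^ k := by
      rw [hxdef, mul_pow]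
      exact mul_le_mul_of_nonneg_right hC (by positivity)
    have hxk : x ^ k = Real.exp ((k : ℝ) * L) := by
      rw [Real.exp_nat_mul, hLdef, Real.exp_log hx]
    have hb2 : (1 - p * βv) ^ (n - 1 - k) ≤
        Real.exp (-(p * βv * ((n : ℝ) - 1 - (k : ℝ)))) := by
      calc (1 - p * βv) ^ (n - 1 - k) ≤ Real.exp (-(p * βv)) ^ (n - 1 - k) := by
            apply pow_le_pow_left₀ hpβ
            linarith [Real.add_one_le_exp (-(p * βv))]
        _ = Real.exp (((n - 1 - k : ℕ) : ℝ) * (-(p * βv))) := (Real.exp_nat_mul _ _).symm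
        _ = Real.exp (-(p * βv * ((n : ℝ) - 1 - (k : ℝ)))) := by rw [hm]; ring_nf
    have hmain : (k : ℝ) * L + (-(p * βv * ((n : ℝ) - 1 - (k : ℝ)))) ≤
        -((1 - ε) * x * βv) := by
      have hA : (k : ℝ) * L ≤ x * L⁻¹ := by
        have h1 : (k : ℝ) * L ≤ (L ^ 2)⁻¹ * x * L :=
          mul_le_mul_of_nonneg_right hk hLpos.le
        have h2 : (L ^ 2)⁻¹ * x * L = x * L⁻¹ := by
          field_simp
        linarith
      have hpb1 : p * βv ≤ 1 := by nlinarith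
      have hB : x * βv - (1 + (L ^ 2)⁻¹ * x) ≤ p * βv * ((n : ℝ) - 1 - (k : ℝ)) := by
        have hk0 : (0 : ℝ) ≤ (k : ℝ) := Nat.cast_nonneg k
        have h3 : p * βv * (k : ℝ) ≤ (k : ℝ) := by nlinarith
        have h4 : p * βv * (n : ℝ) = x * βv := by rw [hxdef]; ring
        nlinarith
      linarith
    calc (((n - 1).choose k : ℕ) : ℝ) * p ^ k * (1 - p * βv) ^ (n - 1 - k)
        ≤ x ^ k * Real.exp (-(p * βv * ((n : ℝ) - 1 - (k : ℝ)))) := by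
          apply mul_le_mul hb1 hb2 (by positivity) (by positivity)
      _ = Real.exp ((k : ℝ) * L + (-(p * βv * ((n : ℝ) - 1 - (k : ℝ))))) := by
          rw [hxk, ← Real.exp_add]
      _ ≤ Real.exp (-((1 - ε) * x * βv)) := Real.exp_le_exp.mpr hmain
  · have hc0 : (n - 1).choose k = 0 := Nat.choose_eq_zero_of_lt (by omega)
    rw [hc0]
    simp only [Nat.cast_zero, zero_mul]
    positivity

/-- Real-number bound for the large-`k` regime. -/
private lemma real_large {n k : ℕ} {p βv ε M : ℝ} (hn : 1 ≤ n) (hp : 0 < p) (hp1 : p ≤ 1)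
    (hβ : 0 < βv) (hβ1 : βv ≤ 1) (hε : 0 ≤ ε) (hpβ : p * βv < 1)
    (hM : Real.exp 2 / (1 - p * βv) < M)
    (hk : M * ((n : ℝ) * p) ≤ (k : ℝ)) :
    (((n - 1).choose k : ℕ) : ℝ) * p ^ k * (1 - p * βv) ^ (n - 1 - k) ≤
      Real.exp (-((1 - ε) * ((n : ℝ) * p) * βv)) := by
  set x : ℝ := (n : ℝ) * p with hxdef
  have hnpos : (0 : ℝ) < n := by exact_mod_cast hn
  have hx : 0 < x := by positivity
  have hd : 0 < 1 - p * βv := by linarith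
  have he2M : Real.exp 2 ≤ M := by
    have : Real.exp 2 ≤ Real.exp 2 / (1 - p * βv) := by
      rw [le_div_iff₀ hd]
      nlinarith [Real.exp_pos 2, mul_pos hp hβ]
    linarith
  have hkx : Real.exp 2 * x ≤ (k : ℝ) := by
    calc Real.exp 2 * x ≤ M * x := mul_le_mul_of_nonneg_right he2M hx.le
      _ ≤ (k : ℝ) := hk
  have hkpos : (0 : ℝ) < (k : ℝ) := lt_of_lt_of_le (by positivity) hkx
  have hpβnn : 0 ≤ 1 - p * βv := hd.le
  have hstep1 : (((n - 1).choose k : ℕ) : ℝ) * p ^ k * (1 - p * βv) ^ (n - 1 - k) ≤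
      x ^ k / (k.factorial : ℝ) := by
    have h1 : (((n - 1).choose k : ℕ) : ℝ) ≤ (n : ℝ) ^ k / (k.factorial : ℝ) := by
      refine le_trans (Nat.choose_le_pow_div k (n - 1)) ?_
      gcongr
      exact_mod_cast Nat.sub_le n 1
    have h2 : (1 - p * βv) ^ (n - 1 - k) ≤ 1 := pow_le_one₀ hpβnn (by nlinarith [mul_pos hp hβ])
    calc (((n - 1).choose k : ℕ) : ℝ) * p ^ k * (1 - p * βv) ^ (n - 1 - k)
        ≤ ((n : ℝ) ^ k / (k.factorial : ℝ)) * p ^ k * 1 := by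
          apply mul_le_mul (mul_le_mul h1 le_rfl (by positivity) (by positivity)) h2
            (by positivity) (by positivity)
      _ = x ^ k / (k.factorial : ℝ) := by rw [mul_one, hxdef, mul_pow]; ring
  have hfact : (k : ℝ) ^ k / (k.factorial : ℝ) ≤ Real.exp (k : ℝ) := by
    calc (k : ℝ) ^ k / (k.factorial : ℝ)
        ≤ ∑ i ∈ Finset.range (k + 1), (k : ℝ) ^ i / (i.factorial : ℝ) :=
          Finset.single_le_sum (f := fun i => (k : ℝ) ^ i / (i.factorial : ℝ))
            (fun i _ => by positivity) (Finset.self_mem_range_succ k)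
      _ ≤ Real.exp (k : ℝ) := Real.sum_le_exp_of_nonneg (Nat.cast_nonneg k) _
  have hxle : x ≤ (k : ℝ) / Real.exp 2 := by
    rw [le_div_iff₀ (Real.exp_pos 2)]
    nlinarith [hkx]
  have hstep2 : x ^ k / (k.factorial : ℝ) ≤ Real.exp (-(k : ℝ)) := by
    calc x ^ k / (k.factorial : ℝ) ≤ ((k : ℝ) / Real.exp 2) ^ k / (k.factorial : ℝ) := by
          gcongr
      _ = ((k : ℝ) ^ k / (k.factorial : ℝ)) / Real.exp ((k : ℝ) * 2) := by
          rw [div_pow, show Real.exp ((k : ℝ) * 2) = Real.exp 2 ^ k from Real.exp_nat_mul 2 k]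
          ring
      _ ≤ Real.exp (k : ℝ) / Real.exp ((k : ℝ) * 2) := by
          gcongr
      _ = Real.exp ((k : ℝ) - (k : ℝ) * 2) := (Real.exp_sub _ _).symm
      _ = Real.exp (-(k : ℝ)) := by ring_nf
  refine le_trans (hstep1.trans hstep2) (Real.exp_le_exp.mpr ?_)
  have he1 : (1 : ℝ) ≤ Real.exp 2 := by nlinarith [Real.add_one_le_exp (2 : ℝ)]
  have h5 : (1 - ε) * x * βv ≤ x := by
    nlinarith [mul_nonneg hx.le (mul_nonneg hε hβ.le),
      mul_nonneg hx.le (sub_nonneg.mpr hβ1)]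
  have h6 : x ≤ (k : ℝ) := by
    nlinarith [mul_nonneg (sub_nonneg.mpr he1) hx.le]
  linarith


/-- Degree tail bounds in `G_n(α, β, W)`: uniformly for `k ≤ δ_n n p_n`
and for `k ≥ M n p_n`, `P(d_i = k) ≤ exp(−n p_n β (1 + o(1)))`. -/
theorem degree_pointwise_tail
    {Ω : ℕ → Type} [∀ n, MeasurableSpace (Ω n)] (α β : ℝ)
    (μ : ∀ n, Measure (Ω n)) (w : ℕ → ℕ → ℕ → ℝ) (A : ∀ n, ℕ → ℕ → Ω n → ℝ)
    (hmodel : IsHeterER α β μ w A) (M : ℝ)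
    (hM : ∀ n : ℕ, 1 ≤ n → Real.exp 2 / (1 - pn α n * β) < M) :
    ∀ ε ∈ Set.Ioo (0 : ℝ) 1, ∃ N : ℕ, ∀ n ≥ N, ∀ i ∈ Finset.range n, ∀ k : ℕ,
      (((k : ℝ) ≤ deltaN α n * ((n : ℝ) * pn α n) →
          μ n {ω | degree A n i ω = (k : ℝ)} ≤
            ENNReal.ofReal (Real.exp (-((1 - ε) * ((n : ℝ) * pn α n) * β)))) ∧
        (M * ((n : ℝ) * pn α n) ≤ (k : ℝ) →
          μ n {ω | degree A n i ω = (k : ℝ)} ≤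
            ENNReal.ofReal (Real.exp (-((1 - ε) * ((n : ℝ) * pn α n) * β))))) := by
  intro ε hε
  have hα := hmodel.alpha_mem
  have hβ := hmodel.beta_mem
  have hxt : Tendsto (fun n : ℕ => (n : ℝ) * pn α n) atTop atTop := by
    have h1 : Tendsto (fun y : ℝ => y ^ ((1 : ℝ) - α)) atTop atTop :=
      tendsto_rpow_atTop (by linarith [hα.2])
    have h2 : Tendsto (fun n : ℕ => ((n : ℝ)) ^ ((1 : ℝ) - α)) atTop atTop :=
      h1.comp tendsto_natCast_atTop_atTop
    refine h2.congr' ?_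
    filter_upwards [eventually_gt_atTop 0] with n hn
    have hn' : (0 : ℝ) < n := by exact_mod_cast hn
    rw [pn, show (1 : ℝ) - α = 1 + (-α) by ring, Real.rpow_add hn', Real.rpow_one]
  have hLt : Tendsto (fun n : ℕ => Real.log ((n : ℝ) * pn α n)) atTop atTop :=
    Real.tendsto_log_atTop.comp hxt
  have h0 : Tendsto (fun n : ℕ => (Real.log ((n : ℝ) * pn α n))⁻¹ +
      ((Real.log ((n : ℝ) * pn α n)) ^ 2)⁻¹ + ((n : ℝ) * pn α n)⁻¹) atTop (nhds 0) := by
    have ha : Tendsto (fun n : ℕ => (Real.log ((n : ℝ) * pn α n))⁻¹) atTop (nhds 0) :=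
      tendsto_inv_atTop_zero.comp hLt
    have hb : Tendsto (fun n : ℕ => ((Real.log ((n : ℝ) * pn α n)) ^ 2)⁻¹) atTop (nhds 0) :=
      tendsto_inv_atTop_zero.comp ((tendsto_pow_atTop two_ne_zero).comp hLt)
    have hc : Tendsto (fun n : ℕ => ((n : ℝ) * pn α n)⁻¹) atTop (nhds 0) :=
      tendsto_inv_atTop_zero.comp hxt
    have := (ha.add hb).add hc
    simpa using this
  have hεβ : (0 : ℝ) < ε * β := mul_pos hε.1 hβ.1
  obtain ⟨N, hN⟩ := eventually_atTop.mp
    (((eventually_ge_atTop 1).and (hLt.eventually_ge_atTop 1)).and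
      (h0.eventually_lt_const hεβ))
  refine ⟨N, fun n hn i hi k => ?_⟩
  obtain ⟨⟨hn1, hL1⟩, hsum⟩ := hN n hn
  have hnpos : (0 : ℝ) < n := by exact_mod_cast hn1
  set p := pn α n with hpdef
  have hp : 0 < p := Real.rpow_pos_of_pos hnpos _
  have hp1 : p ≤ 1 :=
    Real.rpow_le_one_of_one_le_of_nonpos (by exact_mod_cast hn1) (by linarith [hα.1])
  have hx : (0 : ℝ) < (n : ℝ) * p := by positivity
  constructor
  · intro hk
    refine (degree_count_bound hmodel n i hi k).trans (ENNReal.ofReal_le_ofReal ?_)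
    have hcond : (n : ℝ) * p * (Real.log ((n : ℝ) * p))⁻¹ +
        (n : ℝ) * p * ((Real.log ((n : ℝ) * p)) ^ 2)⁻¹ + 1 ≤ ε * ((n : ℝ) * p * β) := by
      have h2 : ((n : ℝ) * p) * ((Real.log ((n : ℝ) * p))⁻¹ +
          ((Real.log ((n : ℝ) * p)) ^ 2)⁻¹ + ((n : ℝ) * p)⁻¹) ≤ ((n : ℝ) * p) * (ε * β) :=
        mul_le_mul_of_nonneg_left hsum.le hx.le
      have hxx : ((n : ℝ) * p) * ((n : ℝ) * p)⁻¹ = 1 := mul_inv_cancel₀ hx.ne'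
      nlinarith [h2, hxx]
    have hk' : (k : ℝ) ≤ ((Real.log ((n : ℝ) * p)) ^ 2)⁻¹ * ((n : ℝ) * p) := by
      rw [hpdef]
      simpa [deltaN] using hk
    exact real_small hn1 hp hp1 hβ.1 hβ.2.le hL1 hcond hk'
  · intro hk
    refine (degree_count_bound hmodel n i hi k).trans (ENNReal.ofReal_le_ofReal ?_)
    have hpβ : p * β < 1 := by
      nlinarith [hβ.1, hβ.2, mul_nonneg (sub_nonneg.mpr hp1) hβ.1.le]
    exact real_large hn1 hp hp1 hβ.1 hβ.2.le hε.1.le hpβ (hM n hn1) hk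
end
end

section
/- Let G_n(α,β,W) be the heterogeneous Erdős–Rényi random graph and write Ā_{ij} = A_{ij} − p_n w_{ij}. For any fixed positive integer t and any vertex i, E[(Σ_{j≠k, j,k≠i} Ā_{ij} Ā_{jk})^{2t}] = O((np_n)^{2t}), uniformly over i ∈ [n]. -/
open MeasureTheory ProbabilityTheory Finset Filter

noncomputable section

def ebound (p : ℝ) : ℕ → ℝ := fun m => if m = 1 then 0 else p

lemma counting_aux (t n : ℕ) (J : Finset ℕ) (hJ : J.card ≤ n) (p : ℝ)
    (hp0 : 0 ≤ p) (hnp : 1 ≤ (n : ℝ) * p) (f : ℕ → ℕ → ℝ)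
    (hf0 : ∀ j a, 1 ≤ a → 0 ≤ f j a) (hf1 : ∀ j, f j 1 = 0)
    (hfp : ∀ j a, 1 ≤ a → f j a ≤ p) :
    ∑ m ∈ Fintype.piFinset (fun _ : Fin (2 * t) => J),
      ∏ j ∈ Finset.image m Finset.univ, f j (#{x | m x = j}) ≤
      ((t : ℝ) + 1) * (t : ℝ) ^ (2 * t) * ((n : ℝ) * p) ^ t := by
  classical
  set s := Fintype.piFinset (fun _ : Fin (2 * t) => J) with hs
  set g : Finset ℕ → ℝ := fun R => if R.card ≤ t then p ^ R.card else 0 with hgdef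
  have hg0 : ∀ R, 0 ≤ g R := by
    intro R; simp only [hgdef]; split
    · exact pow_nonneg hp0 _
    · exact le_refl 0
  have step1 : ∀ m ∈ s, (∏ j ∈ Finset.image m Finset.univ, f j (#{x | m x = j})) ≤
      g (Finset.image m Finset.univ) := by
    intro m hm
    set R := Finset.image m Finset.univ with hR
    have hmult : ∀ j ∈ R, 1 ≤ #{x | m x = j} := by
      intro j hj
      rw [hR, Finset.mem_image] at hj
      obtain ⟨x, -, hx⟩ := hj
      exact Finset.card_pos.mpr ⟨x, by simp [hx]⟩
    by_cases hone : ∃ j ∈ R, #{x | m x = j} = 1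
    · obtain ⟨j, hj, h1⟩ := hone
      rw [Finset.prod_eq_zero hj (by rw [h1, hf1])]
      exact hg0 _
    · push_neg at hone
      have hmult2 : ∀ j ∈ R, 2 ≤ #{x | m x = j} := by
        intro j hj
        have h1 := hmult j hj
        have h2 := hone j hj
        omega
      have hsum : ∑ j ∈ R, #{x | m x = j} = 2 * t := by
        rw [hR, ← Finset.card_eq_sum_card_image m Finset.univ]
        simp
      have hcard : R.card ≤ t := by
        have : 2 * R.card ≤ ∑ j ∈ R, #{x | m x = j} := by
          rw [two_mul]
          calc R.card + R.card = ∑ j ∈ R, 2 := by rw [Finset.sum_const, smul_eq_mul]; omega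
          _ ≤ _ := Finset.sum_le_sum hmult2
        omega
      calc (∏ j ∈ R, f j (#{x | m x = j})) ≤ ∏ j ∈ R, p :=
            Finset.prod_le_prod (fun j hj => hf0 _ _ (hmult j hj))
              (fun j hj => hfp _ _ (hmult j hj))
        _ = p ^ R.card := by rw [Finset.prod_const]
        _ = g R := by rw [hgdef]; simp [hcard]
  calc ∑ m ∈ s, ∏ j ∈ Finset.image m Finset.univ, f j (#{x | m x = j})
      ≤ ∑ m ∈ s, g (Finset.image m Finset.univ) := Finset.sum_le_sum step1
    _ = ∑ R ∈ J.powerset, ∑ m ∈ s.filter (fun m => Finset.image m Finset.univ = R),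
          g (Finset.image m Finset.univ) := by
        refine (Finset.sum_fiberwise_of_maps_to ?_ _).symm
        intro m hm
        rw [Finset.mem_powerset]
        intro j hj
        rw [Finset.mem_image] at hj
        obtain ⟨x, -, hx⟩ := hj
        exact hx ▸ (Fintype.mem_piFinset.mp hm x)
    _ ≤ ∑ R ∈ J.powerset, ((R.card : ℝ) ^ (2 * t)) * g R := by
        refine Finset.sum_le_sum fun R hR => ?_
        have : ∑ m ∈ s.filter (fun m => Finset.image m Finset.univ = R),
            g (Finset.image m Finset.univ) =
            (s.filter (fun m => Finset.image m Finset.univ = R)).card * g R := by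
          rw [Finset.sum_congr rfl (fun m hm => by
            rw [(Finset.mem_filter.mp hm).2]), Finset.sum_const, nsmul_eq_mul]
        rw [this]
        have hsub : s.filter (fun m => Finset.image m Finset.univ = R) ⊆
            Fintype.piFinset (fun _ : Fin (2 * t) => R) := by
          intro m hm
          rw [Fintype.mem_piFinset]
          intro x
          rw [← (Finset.mem_filter.mp hm).2]
          exact Finset.mem_image_of_mem m (Finset.mem_univ x)
        have hcard : (s.filter (fun m => Finset.image m Finset.univ = R)).card ≤
            R.card ^ (2 * t) := by
          simpa [Fintype.card_piFinset_const] using Finset.card_le_card hsub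
        refine mul_le_mul_of_nonneg_right ?_ (hg0 R)
        calc ((s.filter (fun m => Finset.image m Finset.univ = R)).card : ℝ)
            ≤ ((R.card ^ (2 * t) : ℕ) : ℝ) := by exact_mod_cast hcard
          _ = (R.card : ℝ) ^ (2 * t) := by push_cast; ring
    _ ≤ ∑ R ∈ J.powerset, (if R.card ≤ t then ((t:ℝ) ^ (2*t)) * p ^ R.card else 0) := by
        refine Finset.sum_le_sum fun R hR => ?_
        by_cases h : R.card ≤ t
        · simp only [hgdef, if_pos h]
          refine mul_le_mul_of_nonneg_right ?_ (pow_nonneg hp0 _)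
          refine pow_le_pow_left₀ (by positivity) ?_ _
          exact_mod_cast h
        · simp [hgdef, if_neg h]
    _ = ∑ r ∈ Finset.range (J.card + 1),
          (J.card.choose r : ℝ) * (if r ≤ t then ((t:ℝ) ^ (2*t)) * p ^ r else 0) := by
        rw [Finset.sum_powerset]
        refine Finset.sum_congr rfl fun r hr => ?_
        rw [Finset.sum_congr rfl (fun R hR => by
          rw [(Finset.mem_powersetCard.mp hR).2]), Finset.sum_const,
          Finset.card_powersetCard, nsmul_eq_mul]
    _ ≤ ∑ r ∈ Finset.range (J.card + 1),
          (if r ≤ t then ((t:ℝ) ^ (2*t)) * ((n:ℝ) * p) ^ t else 0) := by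
        refine Finset.sum_le_sum fun r hr => ?_
        by_cases h : r ≤ t
        · simp only [if_pos h]
          have h1 : (J.card.choose r : ℝ) ≤ (n : ℝ) ^ r := by
            calc (J.card.choose r : ℝ) ≤ ((n.choose r : ℕ) : ℝ) := by
                  exact_mod_cast Nat.choose_mono r hJ
              _ ≤ ((n ^ r : ℕ) : ℝ) := by exact_mod_cast Nat.choose_le_pow n r
              _ = (n : ℝ) ^ r := by push_cast; ring
          have h2 : ((n:ℝ) * p) ^ r ≤ ((n:ℝ) * p) ^ t := pow_le_pow_right₀ hnp h
          calc (J.card.choose r : ℝ) * (((t:ℝ) ^ (2*t)) * p ^ r)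
              ≤ ((n:ℝ)^r) * (((t:ℝ) ^ (2*t)) * p ^ r) := by
                refine mul_le_mul_of_nonneg_right h1 (by positivity)
            _ = ((t:ℝ) ^ (2*t)) * ((n:ℝ) * p) ^ r := by rw [mul_pow]; ring
            _ ≤ ((t:ℝ) ^ (2*t)) * ((n:ℝ) * p) ^ t := by
                refine mul_le_mul_of_nonneg_left h2 (by positivity)
        · simp [h]
    _ ≤ ((t : ℝ) + 1) * (t : ℝ) ^ (2 * t) * ((n : ℝ) * p) ^ t := by
        rw [← Finset.sum_filter]
        have hsub : (Finset.range (J.card + 1)).filter (fun r => r ≤ t) ⊆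
            Finset.range (t + 1) := by
          intro r hr
          simp only [Finset.mem_filter, Finset.mem_range] at hr ⊢
          omega
        have hnn : (0:ℝ) ≤ ((t:ℝ) ^ (2*t)) * ((n:ℝ) * p) ^ t := by positivity
        calc ∑ r ∈ (Finset.range (J.card + 1)).filter (fun r => r ≤ t),
              ((t:ℝ) ^ (2*t)) * ((n:ℝ) * p) ^ t
            ≤ ∑ r ∈ Finset.range (t + 1), ((t:ℝ) ^ (2*t)) * ((n:ℝ) * p) ^ t :=
              Finset.sum_le_sum_of_subset_of_nonneg hsub (fun _ _ _ => hnn)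
          _ = ((t : ℝ) + 1) * ((t : ℝ) ^ (2 * t) * ((n:ℝ) * p) ^ t) := by
              rw [Finset.sum_const, Finset.card_range, nsmul_eq_mul]; push_cast; ring
          _ = _ := by ring


section EdgeLemmas

variable {Ω : ℕ → Type} [∀ n, MeasurableSpace (Ω n)] {α β : ℝ}
  {μ : ∀ n, Measure (Ω n)} {w : ℕ → ℕ → ℕ → ℝ} {A : ∀ n, ℕ → ℕ → Ω n → ℝ}

lemma pn_nonneg (α : ℝ) (n : ℕ) : 0 ≤ pn α n := Real.rpow_nonneg (Nat.cast_nonneg n) _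

lemma pn_le_one (hα : 0 ≤ α) {n : ℕ} (hn : 1 ≤ n) : pn α n ≤ 1 :=
  Real.rpow_le_one_of_one_le_of_nonpos (by exact_mod_cast hn) (neg_nonpos.mpr hα)

lemma edgeP_nonneg (h : IsHeterER α β μ w A) {n a b : ℕ} (ha : a ∈ Finset.range n)
    (hb : b ∈ Finset.range n) (hab : a ≠ b) : 0 ≤ edgeP α w n a b := by
  have hw := h.w_mem n a ha b hb hab
  have hβ := h.beta_mem.1
  exact mul_nonneg (pn_nonneg α n) (le_trans hβ.le hw.1)

lemma edgeP_le_pn (h : IsHeterER α β μ w A) {n a b : ℕ} (ha : a ∈ Finset.range n)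
    (hb : b ∈ Finset.range n) (hab : a ≠ b) : edgeP α w n a b ≤ pn α n := by
  have hw := h.w_mem n a ha b hb hab
  calc edgeP α w n a b ≤ pn α n * 1 := by
        exact mul_le_mul_of_nonneg_left hw.2 (pn_nonneg α n)
    _ = pn α n := mul_one _

lemma edgeP_le_one (h : IsHeterER α β μ w A) {n a b : ℕ} (ha : a ∈ Finset.range n)
    (hb : b ∈ Finset.range n) (hab : a ≠ b) : edgeP α w n a b ≤ 1 := by
  have hn : 1 ≤ n := by
    rcases Finset.mem_range.mp ha with h'; omega
  exact le_trans (edgeP_le_pn h ha hb hab) (pn_le_one h.alpha_mem.1.le hn)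

lemma abar_meas (h : IsHeterER α β μ w A) (n a b : ℕ) : Measurable (Abar α w A n a b) :=
  (h.A_meas n a b).sub measurable_const

lemma abar_abs_le_one (h : IsHeterER α β μ w A) {n a b : ℕ} (ha : a ∈ Finset.range n)
    (hb : b ∈ Finset.range n) (hab : a ≠ b) (ω : Ω n) : |Abar α w A n a b ω| ≤ 1 := by
  have h0 := edgeP_nonneg h ha hb hab
  have h1 := edgeP_le_one h ha hb hab
  rcases h.A_vals n a b ω with hv | hv <;> rw [Abar, hv] <;> rw [abs_le] <;>
    constructor <;> linarith

lemma integrable_of_bdd {Ω' : Type*} [MeasurableSpace Ω'] {ν : Measure Ω'}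
    [IsProbabilityMeasure ν] {f : Ω' → ℝ} {C : ℝ} (hm : Measurable f)
    (hC : ∀ ω, |f ω| ≤ C) : Integrable f ν :=
  Integrable.mono' (integrable_const C) hm.aestronglyMeasurable
    (Filter.Eventually.of_forall (fun ω => by simpa using hC ω))

lemma integral_A (h : IsHeterER α β μ w A) {n a b : ℕ} (ha : a ∈ Finset.range n)
    (hb : b ∈ Finset.range n) (hab : a ≠ b) :
    ∫ ω, A n a b ω ∂ μ n = edgeP α w n a b := by
  have hmeas : MeasurableSet {ω | A n a b ω = 1} :=
    (h.A_meas n a b) (measurableSet_singleton 1)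
  have hind : (fun ω => A n a b ω) =
      Set.indicator {ω | A n a b ω = 1} (fun _ => (1 : ℝ)) := by
    funext ω
    rcases h.A_vals n a b ω with hv | hv
    · rw [hv]
      symm
      apply Set.indicator_of_notMem
      simp [Set.mem_setOf_eq, hv]
    · rw [hv]
      symm
      apply Set.indicator_of_mem
      exact hv
  calc ∫ ω, A n a b ω ∂ μ n = ∫ ω, Set.indicator {ω | A n a b ω = 1} (fun _ => (1:ℝ)) ω ∂ μ n := by
        rw [← hind]
    _ = (μ n {ω | A n a b ω = 1}).toReal := integral_indicator_one hmeas
    _ = edgeP α w n a b := by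
        rw [h.A_prob n a ha b hb hab, ENNReal.toReal_ofReal (edgeP_nonneg h ha hb hab)]

lemma integrable_A (h : IsHeterER α β μ w A) (n a b : ℕ) :
    Integrable (fun ω => A n a b ω) (μ n) := by
  have := h.prob n
  exact integrable_of_bdd (C := 1) (h.A_meas n a b)
    (fun ω => by rcases h.A_vals n a b ω with hv | hv <;> rw [hv] <;> norm_num)

lemma integral_abar (h : IsHeterER α β μ w A) {n a b : ℕ} (ha : a ∈ Finset.range n)
    (hb : b ∈ Finset.range n) (hab : a ≠ b) :
    ∫ ω, Abar α w A n a b ω ∂ μ n = 0 := by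
  have := h.prob n
  have : ∫ ω, Abar α w A n a b ω ∂ μ n
      = ∫ ω, A n a b ω ∂ μ n - ∫ _, edgeP α w n a b ∂ μ n := by
    rw [← integral_sub (integrable_A h n a b) (integrable_const _)]
    rfl
  rw [this, integral_A h ha hb hab, integral_const]
  simp

lemma integral_abar_sq (h : IsHeterER α β μ w A) {n a b : ℕ} (ha : a ∈ Finset.range n)
    (hb : b ∈ Finset.range n) (hab : a ≠ b) :
    ∫ ω, (Abar α w A n a b ω) ^ 2 ∂ μ n ≤ edgeP α w n a b := by
  have := h.prob n
  set c := edgeP α w n a b with hc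
  have hpt : ∀ ω, (Abar α w A n a b ω) ^ 2 = (1 - 2 * c) * A n a b ω + c ^ 2 := by
    intro ω
    rcases h.A_vals n a b ω with hv | hv <;> rw [Abar, hv, ← hc] <;> ring
  have : ∫ ω, (Abar α w A n a b ω) ^ 2 ∂ μ n
      = ∫ ω, ((1 - 2 * c) * A n a b ω + c ^ 2) ∂ μ n := by
    refine integral_congr_ae (Filter.Eventually.of_forall hpt)
  rw [this, integral_add ((integrable_A h n a b).const_mul _) (integrable_const _),
    integral_const_mul, integral_A h ha hb hab, integral_const]
  have h0 : 0 ≤ c := edgeP_nonneg h ha hb hab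
  simp only [measure_univ, ENNReal.toReal_one, smul_eq_mul, one_mul, probReal_univ]
  nlinarith

lemma abar_moment (h : IsHeterER α β μ w A) {n a b : ℕ} (ha : a ∈ Finset.range n)
    (hb : b ∈ Finset.range n) (hab : a ≠ b) {m : ℕ} (hm : 1 ≤ m) :
    |∫ ω, (Abar α w A n a b ω) ^ m ∂ μ n| ≤ ebound (pn α n) m := by
  have := h.prob n
  rcases eq_or_lt_of_le hm with h1 | h2
  · rw [ebound, ← h1]
    simp only [pow_one, if_pos rfl]
    rw [integral_abar h ha hb hab]
    simp
  · have hm2 : 2 ≤ m := h2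
    have hne : m ≠ 1 := by omega
    rw [ebound]
    simp only [if_neg hne]
    have hb1 : ∀ ω, |(Abar α w A n a b ω) ^ m| ≤ 1 := by
      intro ω
      rw [abs_pow]
      exact pow_le_one₀ (abs_nonneg _) (abar_abs_le_one h ha hb hab ω)
    calc |∫ ω, (Abar α w A n a b ω) ^ m ∂ μ n|
        ≤ ∫ ω, |(Abar α w A n a b ω) ^ m| ∂ μ n := by
          simpa [Real.norm_eq_abs] using
            norm_integral_le_integral_norm (fun ω => (Abar α w A n a b ω) ^ m) (μ := μ n)
      _ ≤ ∫ ω, (Abar α w A n a b ω) ^ 2 ∂ μ n := by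
          refine integral_mono (integrable_of_bdd ((abar_meas h n a b).pow_const m).abs
            (fun ω => by rw [abs_abs]; exact hb1 ω))
            (integrable_of_bdd ((abar_meas h n a b).pow_const 2)
              (fun ω => by
                rw [abs_pow]
                exact pow_le_one₀ (abs_nonneg _) (abar_abs_le_one h ha hb hab ω))) ?_
          intro ω
          simp only []
          rw [abs_pow, ← sq_abs]
          exact pow_le_pow_of_le_one (abs_nonneg _) (abar_abs_le_one h ha hb hab ω) hm2
      _ ≤ edgeP α w n a b := integral_abar_sq h ha hb hab
      _ ≤ pn α n := edgeP_le_pn h ha hb hab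

end EdgeLemmas

section Indep

variable {Ω : ℕ → Type} [∀ n, MeasurableSpace (Ω n)] {α β : ℝ}
  {μ : ∀ n, Measure (Ω n)} {w : ℕ → ℕ → ℕ → ℝ} {A : ∀ n, ℕ → ℕ → Ω n → ℝ}

def eIdx (a b : ℕ) : {q : ℕ × ℕ // q.1 < q.2} :=
  if h : a < b then ⟨(a, b), h⟩ else if h' : b < a then ⟨(b, a), h'⟩ else ⟨(0, 1), Nat.zero_lt_one⟩

lemma eIdx_spec {a b : ℕ} (hab : a ≠ b) :
    ((eIdx a b).1.1 = a ∧ (eIdx a b).1.2 = b) ∨ ((eIdx a b).1.1 = b ∧ (eIdx a b).1.2 = a) := by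
  rw [eIdx]
  rcases lt_or_gt_of_ne hab with h | h
  · rw [dif_pos h]; left; exact ⟨rfl, rfl⟩
  · rw [dif_neg (by omega), dif_pos h]; right; exact ⟨rfl, rfl⟩

lemma eIdx_injOn {a b b' : ℕ} (hb : b ≠ a) (hb' : b' ≠ a) (h : eIdx a b = eIdx a b') :
    b = b' := by
  have h1 := eIdx_spec (show a ≠ b by omega)
  have h2 := eIdx_spec (show a ≠ b' by omega)
  rw [h] at h1
  rcases h1 with ⟨x1, x2⟩ | ⟨x1, x2⟩ <;> rcases h2 with ⟨y1, y2⟩ | ⟨y1, y2⟩ <;> omega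

lemma A_eIdx (h : IsHeterER α β μ w A) (n : ℕ) {a b : ℕ} (hab : a ≠ b) (ω : Ω n) :
    A n (eIdx a b).1.1 (eIdx a b).1.2 ω = A n a b ω := by
  rcases eIdx_spec hab with ⟨h1, h2⟩ | ⟨h1, h2⟩ <;> rw [h1, h2]
  exact h.A_symm n b a ω

lemma prod_expect (h : IsHeterER α β μ w A) (n : ℕ) (R : Finset ℕ)
    (ι : ℕ → {q : ℕ × ℕ // q.1 < q.2}) (φ : ℕ → ℝ → ℝ) (hφ : ∀ j, Measurable (φ j))
    (hinj : Set.InjOn ι R) :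
    ∫ ω, ∏ j ∈ R, φ j (A n (ι j).1.1 (ι j).1.2 ω) ∂ μ n
      = ∏ j ∈ R, ∫ ω, φ j (A n (ι j).1.1 (ι j).1.2 ω) ∂ μ n := by
  classical
  have hprob := h.prob n
  revert hinj
  refine Finset.induction_on R ?_ ?_
  · intro _; simp
  · intro j0 R hj0 ih hinj
    have hinjR : Set.InjOn ι R := by
      intro x hx y hy hxy
      exact hinj (Finset.mem_coe.mpr (Finset.mem_insert_of_mem (Finset.mem_coe.mp hx)))
        (Finset.mem_coe.mpr (Finset.mem_insert_of_mem (Finset.mem_coe.mp hy))) hxy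
    set S : Finset {q : ℕ × ℕ // q.1 < q.2} := {ι j0} with hS
    set T : Finset {q : ℕ × ℕ // q.1 < q.2} := R.image ι with hT
    have hdisj : Disjoint S T := by
      rw [hS, Finset.disjoint_singleton_left]
      intro hmem
      rw [hT, Finset.mem_image] at hmem
      obtain ⟨j, hjR, hje⟩ := hmem
      have : j = j0 := hinj (Finset.mem_coe.mpr (Finset.mem_insert_of_mem hjR))
        (Finset.mem_coe.mpr (Finset.mem_insert_self j0 R)) hje
      exact hj0 (this ▸ hjR)
    set g : (↥S → ℝ) → ℝ := fun v => φ j0 (v ⟨ι j0, Finset.mem_singleton_self _⟩) with hg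
    set hfun : (↥T → ℝ) → ℝ :=
      fun v => ∏ j ∈ R, φ j (if hm : ι j ∈ T then v ⟨ι j, hm⟩ else 0) with hh
    have hgm : Measurable g := (hφ j0).comp (measurable_pi_apply _)
    have hhm : Measurable hfun := by
      rw [hh]
      apply Finset.measurable_prod
      intro j hj
      by_cases hm : ι j ∈ T
      · simp only [dif_pos hm]
        exact (hφ j).comp (measurable_pi_apply _)
      · simp only [dif_neg hm]
        exact measurable_const
    have base := (h.A_indep n).indepFun_finset S T hdisj (fun e => h.A_meas n e.1.1 e.1.2)
    have comp := base.comp hgm hhm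
    have hX : (g ∘ fun ω (e : ↥S) => A n (e : {q : ℕ × ℕ // q.1 < q.2}).1.1
        (e : {q : ℕ × ℕ // q.1 < q.2}).1.2 ω)
        = fun ω => φ j0 (A n (ι j0).1.1 (ι j0).1.2 ω) := rfl
    have hY : (hfun ∘ fun ω (e : ↥T) => A n (e : {q : ℕ × ℕ // q.1 < q.2}).1.1
        (e : {q : ℕ × ℕ // q.1 < q.2}).1.2 ω)
        = fun ω => ∏ j ∈ R, φ j (A n (ι j).1.1 (ι j).1.2 ω) := by
      funext ω
      simp only [Function.comp_apply, hh]
      refine Finset.prod_congr rfl fun j hj => ?_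
      rw [dif_pos (Finset.mem_image_of_mem ι hj)]
    rw [hX, hY] at comp
    have hXm : Measurable (fun ω => φ j0 (A n (ι j0).1.1 (ι j0).1.2 ω)) :=
      (hφ j0).comp (h.A_meas n _ _)
    have hYm : Measurable (fun ω => ∏ j ∈ R, φ j (A n (ι j).1.1 (ι j).1.2 ω)) :=
      Finset.measurable_prod _ (fun j _ => (hφ j).comp (h.A_meas n _ _))
    calc ∫ ω, ∏ j ∈ insert j0 R, φ j (A n (ι j).1.1 (ι j).1.2 ω) ∂ μ n
        = ∫ ω, φ j0 (A n (ι j0).1.1 (ι j0).1.2 ω) *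
            ∏ j ∈ R, φ j (A n (ι j).1.1 (ι j).1.2 ω) ∂ μ n := by
          refine integral_congr_ae (Filter.Eventually.of_forall fun ω => ?_)
          exact Finset.prod_insert hj0
      _ = (∫ ω, φ j0 (A n (ι j0).1.1 (ι j0).1.2 ω) ∂ μ n) *
            ∫ ω, ∏ j ∈ R, φ j (A n (ι j).1.1 (ι j).1.2 ω) ∂ μ n := by
          have := comp.integral_mul_eq_mul_integral hXm.aestronglyMeasurable hYm.aestronglyMeasurable
          simpa [Pi.mul_apply] using this
      _ = ∏ j ∈ insert j0 R, ∫ ω, φ j (A n (ι j).1.1 (ι j).1.2 ω) ∂ μ n := by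
          rw [Finset.prod_insert hj0, ih hinjR]

end Indep

section Inner

variable {Ω : ℕ → Type} [∀ n, MeasurableSpace (Ω n)] {α β : ℝ}
  {μ : ∀ n, Measure (Ω n)} {w : ℕ → ℕ → ℕ → ℝ} {A : ∀ n, ℕ → ℕ → Ω n → ℝ}

lemma one_le_npn (hα1 : α < 1) {n : ℕ} (hn : 1 ≤ n) : 1 ≤ (n : ℝ) * pn α n := by
  have hn1 : (1 : ℝ) ≤ n := by exact_mod_cast hn
  have hnpos : (0 : ℝ) < n := by linarith
  have key : (n : ℝ) ^ ((1 : ℝ) - α) = (n : ℝ) * pn α n := by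
    rw [sub_eq_add_neg, Real.rpow_add hnpos, Real.rpow_one, pn]
  calc (1 : ℝ) = (n : ℝ) ^ (0 : ℝ) := (Real.rpow_zero _).symm
    _ ≤ (n : ℝ) ^ ((1 : ℝ) - α) :=
        Real.rpow_le_rpow_of_exponent_le hn1 (by linarith)
    _ = (n : ℝ) * pn α n := key

lemma ebound_nonneg {p : ℝ} (hp : 0 ≤ p) (a : ℕ) : 0 ≤ ebound p a := by
  rw [ebound]; split <;> [exact le_refl 0; exact hp]

lemma ebound_le {p : ℝ} (hp : 0 ≤ p) (a : ℕ) : ebound p a ≤ p := by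
  rw [ebound]; split <;> [exact hp; exact le_refl p]

lemma mult_pos {s : ℕ} {m : Fin s → ℕ} {k : ℕ} (hk : k ∈ Finset.image m Finset.univ) :
    1 ≤ #{x | m x = k} := by
  rw [Finset.mem_image] at hk
  obtain ⟨x, -, hx⟩ := hk
  exact Finset.card_pos.mpr ⟨x, by simp [hx]⟩

lemma prod_abar_abs_bound (h : IsHeterER α β μ w A) {n : ℕ}
    {j : ℕ} (hj : j ∈ Finset.range n) {K : Finset ℕ} (hK : K ⊆ Finset.range n)
    (hjK : j ∉ K) {s : ℕ} (m : Fin s → ℕ) (hmK : ∀ x, m x ∈ K) :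
    |∫ ω, ∏ x, Abar α w A n j (m x) ω ∂ μ n| ≤
      ∏ k ∈ Finset.image m Finset.univ, ebound (pn α n) (#{x | m x = k}) := by
  classical
  have hprob := h.prob n
  have hjk : ∀ k ∈ K, j ≠ k := fun k hk e => hjK (e ▸ hk)
  set R := Finset.image m Finset.univ with hR
  have hRK : ∀ k ∈ R, k ∈ K := by
    intro k hk
    rw [hR, Finset.mem_image] at hk
    obtain ⟨x, -, hx⟩ := hk
    exact hx ▸ hmK x
  have hinj : Set.InjOn (eIdx j) R := by
    intro x hx y hy e
    exact eIdx_injOn (fun (e' : x = j) => hjK (e' ▸ hRK x (Finset.mem_coe.mp hx)))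
      (fun (e' : y = j) => hjK (e' ▸ hRK y (Finset.mem_coe.mp hy))) e
  have step1 : ∫ ω, ∏ x, Abar α w A n j (m x) ω ∂ μ n
      = ∏ k ∈ R, ∫ ω, (Abar α w A n j k ω) ^ (#{x | m x = k}) ∂ μ n := by
    calc ∫ ω, ∏ x, Abar α w A n j (m x) ω ∂ μ n
        = ∫ ω, ∏ k ∈ R, (fun y => (y - edgeP α w n j k) ^ (#{x | m x = k}))
            (A n (eIdx j k).1.1 (eIdx j k).1.2 ω) ∂ μ n := by
          refine integral_congr_ae (Filter.Eventually.of_forall fun ω => ?_)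
          beta_reduce
          rw [Finset.prod_comp (fun k => Abar α w A n j k ω) m]
          refine Finset.prod_congr rfl fun k hk => ?_
          beta_reduce
          rw [A_eIdx h n (hjk k (hRK k hk)) ω]
          rfl
      _ = ∏ k ∈ R, ∫ ω, (fun y => (y - edgeP α w n j k) ^ (#{x | m x = k}))
            (A n (eIdx j k).1.1 (eIdx j k).1.2 ω) ∂ μ n :=
          prod_expect h n R (eIdx j)
            (fun k y => (y - edgeP α w n j k) ^ (#{x | m x = k}))
            (fun k => (measurable_id.sub measurable_const).pow_const _) hinj
      _ = ∏ k ∈ R, ∫ ω, (Abar α w A n j k ω) ^ (#{x | m x = k}) ∂ μ n := by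
          refine Finset.prod_congr rfl fun k hk => ?_
          refine integral_congr_ae (Filter.Eventually.of_forall fun ω => ?_)
          beta_reduce
          rw [A_eIdx h n (hjk k (hRK k hk)) ω]
          rfl
  rw [step1]
  calc |∏ k ∈ R, ∫ ω, (Abar α w A n j k ω) ^ (#{x | m x = k}) ∂ μ n|
      = ∏ k ∈ R, |∫ ω, (Abar α w A n j k ω) ^ (#{x | m x = k}) ∂ μ n| :=
        Finset.abs_prod _ _
    _ ≤ ∏ k ∈ R, ebound (pn α n) (#{x | m x = k}) :=
        Finset.prod_le_prod (fun k _ => abs_nonneg _)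
          (fun k hk => abar_moment h hj (hK (hRK k hk)) (hjk k (hRK k hk))
            (mult_pos hk))

lemma inner_moment (h : IsHeterER α β μ w A) (t : ℕ) {n : ℕ} (hn : 1 ≤ n)
    {j : ℕ} (hj : j ∈ Finset.range n) (K : Finset ℕ) (hK : K ⊆ Finset.range n)
    (hjK : j ∉ K) :
    ∫ ω, (∑ k ∈ K, Abar α w A n j k ω) ^ (2 * t) ∂ μ n ≤
      ((t : ℝ) + 1) * (t : ℝ) ^ (2 * t) * ((n : ℝ) * pn α n) ^ t := by
  classical
  have hprob := h.prob n
  have hjk : ∀ k ∈ K, j ≠ k := fun k hk e => hjK (e ▸ hk)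
  have habs : ∀ k ∈ K, ∀ ω, |Abar α w A n j k ω| ≤ 1 := fun k hk ω =>
    abar_abs_le_one h hj (hK hk) (hjk k hk) ω
  have hmeas : ∀ (m : Fin (2 * t) → ℕ), Measurable (fun ω => ∏ x, Abar α w A n j (m x) ω) :=
    fun m => Finset.measurable_prod _ (fun x _ => abar_meas h n j (m x))
  have hint : ∀ m ∈ Fintype.piFinset (fun _ : Fin (2 * t) => K),
      Integrable (fun ω => ∏ x, Abar α w A n j (m x) ω) (μ n) := by
    intro m hm
    refine integrable_of_bdd (C := 1) (hmeas m) (fun ω => ?_)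
    rw [Finset.abs_prod]
    exact Finset.prod_le_one (fun x _ => abs_nonneg _)
      (fun x _ => habs (m x) (Fintype.mem_piFinset.mp hm x) ω)
  have expand : ∫ ω, (∑ k ∈ K, Abar α w A n j k ω) ^ (2 * t) ∂ μ n
      = ∑ m ∈ Fintype.piFinset (fun _ : Fin (2 * t) => K),
          ∫ ω, ∏ x, Abar α w A n j (m x) ω ∂ μ n := by
    rw [← integral_finset_sum _ hint]
    refine integral_congr_ae (Filter.Eventually.of_forall fun ω => ?_)
    exact Finset.sum_pow' K (fun k => Abar α w A n j k ω) (2 * t)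
  have hterm : ∀ m ∈ Fintype.piFinset (fun _ : Fin (2 * t) => K),
      ∫ ω, ∏ x, Abar α w A n j (m x) ω ∂ μ n ≤
        ∏ k ∈ Finset.image m Finset.univ, ebound (pn α n) (#{x | m x = k}) := by
    intro m hm
    exact le_trans (le_abs_self _)
      (prod_abar_abs_bound h hj hK hjK m (Fintype.mem_piFinset.mp hm))
  rw [expand]
  calc ∑ m ∈ Fintype.piFinset (fun _ : Fin (2 * t) => K),
        ∫ ω, ∏ x, Abar α w A n j (m x) ω ∂ μ n
      ≤ ∑ m ∈ Fintype.piFinset (fun _ : Fin (2 * t) => K),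
        ∏ k ∈ Finset.image m Finset.univ, ebound (pn α n) (#{x | m x = k}) :=
        Finset.sum_le_sum hterm
    _ ≤ ((t : ℝ) + 1) * (t : ℝ) ^ (2 * t) * ((n : ℝ) * pn α n) ^ t := by
        refine counting_aux t n K ?_ (pn α n) (pn_nonneg α n)
          (one_le_npn h.alpha_mem.2 hn) (fun _ a => ebound (pn α n) a)
          (fun _ a _ => ebound_nonneg (pn_nonneg α n) a)
          (fun _ => by simp [ebound])
          (fun _ a _ => ebound_le (pn_nonneg α n) a)
        calc K.card ≤ (Finset.range n).card := Finset.card_le_card hK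
          _ = n := Finset.card_range n

end Inner

section Main

variable {Ω : ℕ → Type} [∀ n, MeasurableSpace (Ω n)] {α β : ℝ}
  {μ : ∀ n, Measure (Ω n)} {w : ℕ → ℕ → ℕ → ℝ} {A : ∀ n, ℕ → ℕ → Ω n → ℝ}

lemma prod_pow_le_sum (R : Finset ℕ) (hR : R.Nonempty) (x : ℕ → ℝ)
    (hx : ∀ j ∈ R, 0 ≤ x j) {a : ℕ → ℕ} {s : ℕ} (hs : ∑ j ∈ R, a j = s) :
    ∏ j ∈ R, x j ^ a j ≤ ∑ j ∈ R, x j ^ s := by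
  obtain ⟨j0, hj0, hmax⟩ := Finset.exists_max_image R x hR
  calc ∏ j ∈ R, x j ^ a j ≤ ∏ j ∈ R, x j0 ^ a j :=
        Finset.prod_le_prod (fun j hj => pow_nonneg (hx j hj) _)
          (fun j hj => pow_le_pow_left₀ (hx j hj) (hmax j hj) _)
    _ = x j0 ^ s := by rw [Finset.prod_pow_eq_pow_sum, hs]
    _ ≤ ∑ j ∈ R, x j ^ s := Finset.single_le_sum (fun j hj => pow_nonneg (hx j hj) s) hj0

/-- `E[(Σ_{j≠k, j,k≠i} Ā_{ij} Ā_{jk})^{2t}] = O((n p_n)^{2t})`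
uniformly in `i ∈ [n]`. -/
theorem centered_quadratic_moment
    {Ω : ℕ → Type} [∀ n, MeasurableSpace (Ω n)] (α β : ℝ)
    (μ : ∀ n, Measure (Ω n)) (w : ℕ → ℕ → ℕ → ℝ) (A : ∀ n, ℕ → ℕ → Ω n → ℝ)
    (hmodel : IsHeterER α β μ w A) (t : ℕ) (ht : 0 < t) :
    ∃ C : ℝ, 0 < C ∧ ∃ N : ℕ, ∀ n ≥ N, ∀ i ∈ Finset.range n,
      (∫ ω, (∑ j ∈ (Finset.range n).erase i, ∑ k ∈ ((Finset.range n).erase i).erase j,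
          Abar α w A n i j ω * Abar α w A n j k ω) ^ (2 * t) ∂μ n) ≤
        C * ((n : ℝ) * pn α n) ^ (2 * t) := by
  classical
  set C1 : ℝ := ((t : ℝ) + 1) * (t : ℝ) ^ (2 * t) with hC1
  have hC1pos : 0 < C1 := by positivity
  refine ⟨2 * t * C1 ^ 2 + 1, by positivity, 1, ?_⟩
  intro n hn i hi
  have hprob := hmodel.prob n
  have hp0 : 0 ≤ pn α n := pn_nonneg α n
  have hnp : 1 ≤ (n : ℝ) * pn α n := one_le_npn hmodel.alpha_mem.2 hn
  set J := (Finset.range n).erase i with hJ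
  have hJsub : J ⊆ Finset.range n := Finset.erase_subset _ _
  have hiJ : i ∉ J := Finset.notMem_erase i _
  have hJcard : J.card ≤ n := le_trans (Finset.card_le_card hJsub) (le_of_eq (Finset.card_range n))
  have hij : ∀ j ∈ J, i ≠ j := fun j hj e => hiJ (e ▸ hj)
  set Y : ℕ → Ω n → ℝ := fun j ω => ∑ k ∈ J.erase j, Abar α w A n j k ω with hYdef
  -- basic facts about Y
  have hYmeas : ∀ j, Measurable (Y j) :=
    fun j => Finset.measurable_sum _ (fun k _ => abar_meas hmodel n j k)
  have hYabs : ∀ j ∈ J, ∀ ω, |Y j ω| ≤ (n : ℝ) := by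
    intro j hj ω
    have hcard : ((J.erase j).card : ℝ) ≤ (n : ℝ) := by
      have : (J.erase j).card ≤ n :=
        le_trans (Finset.card_le_card (Finset.erase_subset _ _)) hJcard
      exact_mod_cast this
    calc |Y j ω| ≤ ∑ k ∈ J.erase j, |Abar α w A n j k ω| := Finset.abs_sum_le_sum_abs _ _
      _ ≤ ∑ k ∈ J.erase j, 1 := Finset.sum_le_sum (fun k hk =>
          abar_abs_le_one hmodel (hJsub hj) (hJsub (Finset.mem_of_mem_erase hk))
            (fun e => (Finset.ne_of_mem_erase hk) e.symm) ω)
      _ = ((J.erase j).card : ℝ) := by rw [Finset.sum_const]; simp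
      _ ≤ (n : ℝ) := hcard
  have hYmom : ∀ j ∈ J, ∫ ω, (Y j ω) ^ (2 * t) ∂ μ n ≤ C1 * ((n : ℝ) * pn α n) ^ t := by
    intro j hj
    have := inner_moment hmodel t hn (hJsub hj) (J.erase j)
      (Finset.Subset.trans (Finset.erase_subset _ _) hJsub)
      (Finset.notMem_erase j J)
    calc ∫ ω, (Y j ω) ^ (2 * t) ∂ μ n
        = ∫ ω, (∑ k ∈ J.erase j, Abar α w A n j k ω) ^ (2 * t) ∂ μ n := rfl
      _ ≤ ((t : ℝ) + 1) * (t : ℝ) ^ (2 * t) * ((n : ℝ) * pn α n) ^ t := this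
      _ = C1 * ((n : ℝ) * pn α n) ^ t := by rw [hC1]
  -- the target sum of products
  have hrw : ∀ ω, (∑ j ∈ J, ∑ k ∈ J.erase j, Abar α w A n i j ω * Abar α w A n j k ω)
      = ∑ j ∈ J, Abar α w A n i j ω * Y j ω := by
    intro ω
    refine Finset.sum_congr rfl fun j hj => ?_
    rw [hYdef, Finset.mul_sum]
  -- expansion
  have hX1meas : ∀ (m : Fin (2 * t) → ℕ),
      Measurable (fun ω => ∏ x, Abar α w A n i (m x) ω) :=
    fun m => Finset.measurable_prod _ (fun x _ => abar_meas hmodel n i (m x))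
  have hX2meas : ∀ (m : Fin (2 * t) → ℕ), Measurable (fun ω => ∏ x, Y (m x) ω) :=
    fun m => Finset.measurable_prod _ (fun x _ => hYmeas (m x))
  have hX1abs : ∀ (m : Fin (2 * t) → ℕ), (∀ x, m x ∈ J) → ∀ ω,
      |∏ x, Abar α w A n i (m x) ω| ≤ 1 := by
    intro m hmJ ω
    rw [Finset.abs_prod]
    exact Finset.prod_le_one (fun x _ => abs_nonneg _)
      (fun x _ => abar_abs_le_one hmodel hi (hJsub (hmJ x)) (hij (m x) (hmJ x)) ω)
  have hX2abs : ∀ (m : Fin (2 * t) → ℕ), (∀ x, m x ∈ J) → ∀ ω,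
      |∏ x, Y (m x) ω| ≤ (n : ℝ) ^ (2 * t) := by
    intro m hmJ ω
    rw [Finset.abs_prod]
    calc ∏ x, |Y (m x) ω| ≤ ∏ _x : Fin (2 * t), (n : ℝ) :=
          Finset.prod_le_prod (fun x _ => abs_nonneg _)
            (fun x _ => hYabs (m x) (hmJ x) ω)
      _ = (n : ℝ) ^ (2 * t) := by
          rw [Finset.prod_const, Finset.card_univ, Fintype.card_fin]
  have hint : ∀ m ∈ Fintype.piFinset (fun _ : Fin (2 * t) => J),
      Integrable (fun ω => (∏ x, Abar α w A n i (m x) ω) * ∏ x, Y (m x) ω) (μ n) := by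
    intro m hm
    have hmJ := Fintype.mem_piFinset.mp hm
    refine integrable_of_bdd (C := (n : ℝ) ^ (2 * t)) ((hX1meas m).mul (hX2meas m))
      (fun ω => ?_)
    rw [abs_mul]
    calc |∏ x, Abar α w A n i (m x) ω| * |∏ x, Y (m x) ω|
        ≤ 1 * ((n : ℝ) ^ (2 * t)) :=
          mul_le_mul (hX1abs m hmJ ω) (hX2abs m hmJ ω) (abs_nonneg _) zero_le_one
      _ = (n : ℝ) ^ (2 * t) := one_mul _
  have expand : ∫ ω, (∑ j ∈ J, Abar α w A n i j ω * Y j ω) ^ (2 * t) ∂ μ n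
      = ∑ m ∈ Fintype.piFinset (fun _ : Fin (2 * t) => J),
          ∫ ω, (∏ x, Abar α w A n i (m x) ω) * ∏ x, Y (m x) ω ∂ μ n := by
    rw [← integral_finset_sum _ hint]
    refine integral_congr_ae (Filter.Eventually.of_forall fun ω => ?_)
    beta_reduce
    rw [Finset.sum_pow' J (fun j => Abar α w A n i j ω * Y j ω) (2 * t)]
    exact Finset.sum_congr rfl fun m _ => Finset.prod_mul_distrib
  -- splitting by independence
  have hsplit : ∀ m ∈ Fintype.piFinset (fun _ : Fin (2 * t) => J),
      ∫ ω, (∏ x, Abar α w A n i (m x) ω) * ∏ x, Y (m x) ω ∂ μ n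
        = (∫ ω, ∏ x, Abar α w A n i (m x) ω ∂ μ n) * ∫ ω, ∏ x, Y (m x) ω ∂ μ n := by
    intro m hm
    have hmJ := Fintype.mem_piFinset.mp hm
    have himx : ∀ x, i ≠ m x := fun x => hij (m x) (hmJ x)
    set SE : Finset {q : ℕ × ℕ // q.1 < q.2} := J.image (eIdx i) with hSE
    set TE : Finset {q : ℕ × ℕ // q.1 < q.2} :=
      (J ×ˢ J).subtype (fun q => q.1 < q.2) with hTE
    have hTmem : ∀ a ∈ J, ∀ b ∈ J, a ≠ b → eIdx a b ∈ TE := by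
      intro a ha b hb hab
      rw [hTE, Finset.mem_subtype]
      rcases eIdx_spec hab with ⟨h1, h2⟩ | ⟨h1, h2⟩
      · exact Finset.mem_product.mpr ⟨by rw [h1]; exact ha, by rw [h2]; exact hb⟩
      · exact Finset.mem_product.mpr ⟨by rw [h1]; exact hb, by rw [h2]; exact ha⟩
    have hdisj : Disjoint SE TE := by
      rw [Finset.disjoint_left]
      intro e heS heT
      rw [hSE, Finset.mem_image] at heS
      obtain ⟨j, hj, hje⟩ := heS
      rw [hTE, Finset.mem_subtype] at heT
      have hmem := Finset.mem_product.mp heT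
      rcases eIdx_spec (hij j hj) with ⟨h1, h2⟩ | ⟨h1, h2⟩
      · rw [hje] at h1; exact hiJ (h1 ▸ hmem.1)
      · rw [hje] at h2; exact hiJ (h2 ▸ hmem.2)
    set g : (↥SE → ℝ) → ℝ := fun v => ∏ x,
      ((if hm' : eIdx i (m x) ∈ SE then v ⟨eIdx i (m x), hm'⟩ else 0)
        - edgeP α w n i (m x)) with hgdef
    set hfun : (↥TE → ℝ) → ℝ := fun v => ∏ x,
      (∑ k ∈ J.erase (m x),
        ((if hm' : eIdx (m x) k ∈ TE then v ⟨eIdx (m x) k, hm'⟩ else 0)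
          - edgeP α w n (m x) k)) with hhdef
    have hgm : Measurable g := by
      rw [hgdef]
      refine Finset.measurable_prod _ fun x _ => ?_
      refine Measurable.sub ?_ measurable_const
      by_cases hm' : eIdx i (m x) ∈ SE
      · simp only [dif_pos hm']; exact measurable_pi_apply _
      · simp only [dif_neg hm']; exact measurable_const
    have hhm : Measurable hfun := by
      rw [hhdef]
      refine Finset.measurable_prod _ fun x _ => ?_
      refine Finset.measurable_sum _ fun k _ => ?_
      refine Measurable.sub ?_ measurable_const
      by_cases hm' : eIdx (m x) k ∈ TE
      · simp only [dif_pos hm']; exact measurable_pi_apply _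
      · simp only [dif_neg hm']; exact measurable_const
    have base := (hmodel.A_indep n).indepFun_finset SE TE hdisj
      (fun e => hmodel.A_meas n e.1.1 e.1.2)
    have comp := base.comp hgm hhm
    have hXeq : (g ∘ fun ω (e : ↥SE) => A n (e : {q : ℕ × ℕ // q.1 < q.2}).1.1
        (e : {q : ℕ × ℕ // q.1 < q.2}).1.2 ω)
        = fun ω => ∏ x, Abar α w A n i (m x) ω := by
      funext ω
      simp only [Function.comp_apply, hgdef]
      refine Finset.prod_congr rfl fun x _ => ?_
      rw [dif_pos (Finset.mem_image_of_mem _ (hmJ x))]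
      rw [A_eIdx hmodel n (himx x) ω]
      rfl
    have hYeq : (hfun ∘ fun ω (e : ↥TE) => A n (e : {q : ℕ × ℕ // q.1 < q.2}).1.1
        (e : {q : ℕ × ℕ // q.1 < q.2}).1.2 ω)
        = fun ω => ∏ x, Y (m x) ω := by
      funext ω
      simp only [Function.comp_apply, hhdef]
      refine Finset.prod_congr rfl fun x _ => ?_
      rw [hYdef]
      refine Finset.sum_congr rfl fun k hk => ?_
      have hkJ : k ∈ J := Finset.mem_of_mem_erase hk
      have hkne : m x ≠ k := fun e => (Finset.ne_of_mem_erase hk) e.symm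
      rw [dif_pos (hTmem (m x) (hmJ x) k hkJ hkne)]
      rw [A_eIdx hmodel n hkne ω]
      rfl
    rw [hXeq, hYeq] at comp
    have := comp.integral_mul_eq_mul_integral (hX1meas m).aestronglyMeasurable
      (hX2meas m).aestronglyMeasurable
    simpa [Pi.mul_apply] using this
  -- bound the Y-product integral
  have hX2bound : ∀ m ∈ Fintype.piFinset (fun _ : Fin (2 * t) => J),
      |∫ ω, ∏ x, Y (m x) ω ∂ μ n| ≤
        (2 * t : ℝ) * (C1 * ((n : ℝ) * pn α n) ^ t) := by
    intro m hm
    have hmJ := Fintype.mem_piFinset.mp hm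
    set R := Finset.image m Finset.univ with hR
    have hRJ : ∀ j ∈ R, j ∈ J := by
      intro j hj
      rw [hR, Finset.mem_image] at hj
      obtain ⟨x, -, hx⟩ := hj
      exact hx ▸ hmJ x
    have hRne : R.Nonempty := ⟨m ⟨0, by omega⟩, Finset.mem_image_of_mem m (Finset.mem_univ _)⟩
    have hsummult : ∑ j ∈ R, #{x | m x = j} = 2 * t := by
      rw [hR, ← Finset.card_eq_sum_card_image m Finset.univ]
      simp
    have hpt : ∀ ω, |∏ x, Y (m x) ω| ≤ ∑ j ∈ R, (Y j ω) ^ (2 * t) := by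
      intro ω
      have heq : ∀ (y : ℝ), |y| ^ (2 * t) = y ^ (2 * t) := by
        intro y
        rw [pow_mul, pow_mul, sq_abs]
      calc |∏ x, Y (m x) ω| = ∏ x, |Y (m x) ω| := Finset.abs_prod _ _
        _ = ∏ j ∈ R, |Y j ω| ^ (#{x | m x = j}) :=
            Finset.prod_comp (fun j => |Y j ω|) m
        _ ≤ ∑ j ∈ R, |Y j ω| ^ (2 * t) :=
            prod_pow_le_sum R hRne _ (fun j _ => abs_nonneg _) hsummult
        _ = ∑ j ∈ R, (Y j ω) ^ (2 * t) :=
            Finset.sum_congr rfl fun j _ => heq _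
    calc |∫ ω, ∏ x, Y (m x) ω ∂ μ n|
        ≤ ∫ ω, |∏ x, Y (m x) ω| ∂ μ n := by
          simpa [Real.norm_eq_abs, Finset.abs_prod] using
            norm_integral_le_integral_norm (fun ω => ∏ x, Y (m x) ω) (μ := μ n)
      _ ≤ ∫ ω, ∑ j ∈ R, (Y j ω) ^ (2 * t) ∂ μ n := by
          refine integral_mono
            (integrable_of_bdd (C := (n : ℝ) ^ (2 * t)) (hX2meas m).abs
              (fun ω => by rw [abs_abs]; exact hX2abs m hmJ ω))
            (integrable_finset_sum _ (fun j hj =>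
              integrable_of_bdd (C := (n : ℝ) ^ (2 * t))
                ((hYmeas j).pow_const _)
                (fun ω => by
                  rw [abs_pow]
                  exact pow_le_pow_left₀ (abs_nonneg _) (hYabs j (hRJ j hj) ω) _)))
            hpt
      _ = ∑ j ∈ R, ∫ ω, (Y j ω) ^ (2 * t) ∂ μ n := by
          rw [integral_finset_sum _ (fun j hj =>
            integrable_of_bdd (C := (n : ℝ) ^ (2 * t)) ((hYmeas j).pow_const _)
              (fun ω => by
                rw [abs_pow]
                exact pow_le_pow_left₀ (abs_nonneg _) (hYabs j (hRJ j hj) ω) _))]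
      _ ≤ ∑ _j ∈ R, C1 * ((n : ℝ) * pn α n) ^ t :=
          Finset.sum_le_sum (fun j hj => hYmom j (hRJ j hj))
      _ = (R.card : ℝ) * (C1 * ((n : ℝ) * pn α n) ^ t) := by
          rw [Finset.sum_const, nsmul_eq_mul]
      _ ≤ (2 * t : ℝ) * (C1 * ((n : ℝ) * pn α n) ^ t) := by
          have hcard : R.card ≤ 2 * t := by
            calc R.card ≤ (Finset.univ : Finset (Fin (2 * t))).card :=
                  Finset.card_image_le
              _ = 2 * t := by rw [Finset.card_univ, Fintype.card_fin]
          have : (R.card : ℝ) ≤ (2 * t : ℝ) := by exact_mod_cast hcard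
          exact mul_le_mul_of_nonneg_right this (by positivity)
  -- putting everything together
  calc ∫ ω, (∑ j ∈ J, ∑ k ∈ J.erase j,
          Abar α w A n i j ω * Abar α w A n j k ω) ^ (2 * t) ∂ μ n
      = ∫ ω, (∑ j ∈ J, Abar α w A n i j ω * Y j ω) ^ (2 * t) ∂ μ n := by
        refine integral_congr_ae (Filter.Eventually.of_forall fun ω => ?_)
        beta_reduce
        rw [hrw ω]
    _ = ∑ m ∈ Fintype.piFinset (fun _ : Fin (2 * t) => J),
          ∫ ω, (∏ x, Abar α w A n i (m x) ω) * ∏ x, Y (m x) ω ∂ μ n := expand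
    _ ≤ ∑ m ∈ Fintype.piFinset (fun _ : Fin (2 * t) => J),
          (∏ j ∈ Finset.image m Finset.univ, ebound (pn α n) (#{x | m x = j})) *
            ((2 * t : ℝ) * (C1 * ((n : ℝ) * pn α n) ^ t)) := by
        refine Finset.sum_le_sum fun m hm => ?_
        rw [hsplit m hm]
        calc (∫ ω, ∏ x, Abar α w A n i (m x) ω ∂ μ n) * ∫ ω, ∏ x, Y (m x) ω ∂ μ n
            ≤ |(∫ ω, ∏ x, Abar α w A n i (m x) ω ∂ μ n) * ∫ ω, ∏ x, Y (m x) ω ∂ μ n| :=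
              le_abs_self _
          _ = |∫ ω, ∏ x, Abar α w A n i (m x) ω ∂ μ n| * |∫ ω, ∏ x, Y (m x) ω ∂ μ n| :=
              abs_mul _ _
          _ ≤ (∏ j ∈ Finset.image m Finset.univ, ebound (pn α n) (#{x | m x = j})) *
              ((2 * t : ℝ) * (C1 * ((n : ℝ) * pn α n) ^ t)) :=
              mul_le_mul
                (prod_abar_abs_bound hmodel hi hJsub hiJ m (Fintype.mem_piFinset.mp hm))
                (hX2bound m hm) (abs_nonneg _)
                (Finset.prod_nonneg fun _ _ => ebound_nonneg hp0 _)
    _ = (∑ m ∈ Fintype.piFinset (fun _ : Fin (2 * t) => J),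
          ∏ j ∈ Finset.image m Finset.univ, ebound (pn α n) (#{x | m x = j})) *
            ((2 * t : ℝ) * (C1 * ((n : ℝ) * pn α n) ^ t)) := by
        rw [Finset.sum_mul]
    _ ≤ (C1 * ((n : ℝ) * pn α n) ^ t) * ((2 * t : ℝ) * (C1 * ((n : ℝ) * pn α n) ^ t)) := by
        refine mul_le_mul_of_nonneg_right ?_ (by positivity)
        have := counting_aux t n J hJcard (pn α n) hp0 hnp
          (fun _ a => ebound (pn α n) a)
          (fun _ a _ => ebound_nonneg hp0 a)
          (fun _ => by simp [ebound])
          (fun _ a _ => ebound_le hp0 a)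
        calc ∑ m ∈ Fintype.piFinset (fun _ : Fin (2 * t) => J),
              ∏ j ∈ Finset.image m Finset.univ, ebound (pn α n) (#{x | m x = j})
            ≤ ((t : ℝ) + 1) * (t : ℝ) ^ (2 * t) * ((n : ℝ) * pn α n) ^ t := this
          _ = C1 * ((n : ℝ) * pn α n) ^ t := by rw [hC1]
    _ = (2 * t : ℝ) * C1 ^ 2 * ((n : ℝ) * pn α n) ^ (2 * t) := by
        rw [two_mul t, pow_add]
        ring
    _ ≤ (2 * t * C1 ^ 2 + 1) * ((n : ℝ) * pn α n) ^ (2 * t) := by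
        refine mul_le_mul_of_nonneg_right ?_ (by positivity)
        push_cast
        linarith
end Main
end
end

section
/- Let G_n(α,β,W) be the heterogeneous Erdős–Rényi random graph and write Ā_{ij} = A_{ij} − p_n w_{ij}, μ_{ij} = p_n w_{ij}. For any fixed positive integer t and any vertex i, E[(Σ_{j≠k, j,k≠i} Ā_{ij} μ_{jk})^{2t}] = O((np_n)^{3t}), uniformly over i ∈ [n]. -/
open MeasureTheory ProbabilityTheory Finset Filter

noncomputable section

lemma my_integrable_of_abs_le {Ω : Type*} [MeasurableSpace Ω] {P : Measure Ω} [IsFiniteMeasure P]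
    {f : Ω → ℝ} (hf : Measurable f) (C : ℝ) (h : ∀ ω, |f ω| ≤ C) : Integrable f P :=
  (integrable_const C).mono' hf.aestronglyMeasurable
    (Filter.Eventually.of_forall fun ω => by simpa [Real.norm_eq_abs] using h ω)

lemma my_iIndepFun_precomp {Ω ι κ β : Type*} [MeasurableSpace Ω] {P : Measure Ω}
    [mβ : MeasurableSpace β] {f : ι → Ω → β} {e : κ → ι} (he : Function.Injective e)
    (h : iIndepFun f P) : iIndepFun (fun k => f (e k)) P := by
  classical
  rw [iIndepFun_iff_measure_inter_preimage_eq_mul] at h ⊢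
  intro S sets hsets
  set sets' : ι → Set β := fun x => if hx : ∃ k ∈ S, e k = x then sets hx.choose else Set.univ
    with hsets'
  have key : ∀ k ∈ S, sets' (e k) = sets k := by
    intro k hk
    have hex : ∃ k' ∈ S, e k' = e k := ⟨k, hk, rfl⟩
    have hspec := hex.choose_spec
    simp only [hsets', dif_pos hex]
    exact congrArg sets (he hspec.2)
  have h1 : (⋂ k ∈ S, (f (e k)) ⁻¹' sets k) = ⋂ x ∈ S.image e, f x ⁻¹' sets' x := by
    rw [Finset.set_biInter_finset_image]
    exact Set.iInter₂_congr fun k hk => by rw [key k hk]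
  have h2 : (∏ k ∈ S, P (f (e k) ⁻¹' sets k)) = ∏ x ∈ S.image e, P (f x ⁻¹' sets' x) := by
    rw [Finset.prod_image (fun a _ b _ hab => he hab)]
    exact Finset.prod_congr rfl fun k hk => by rw [key k hk]
  rw [h1, h2]
  apply h
  intro x hx
  obtain ⟨k, hk, rfl⟩ := Finset.mem_image.mp hx
  rw [key k hk]; exact hsets k hk

lemma my_bdd_prod {Ω : Type*} (Z : ℕ → Ω → ℝ) (T : Finset ℕ)
    (hbdd : ∀ j ∈ T, ∃ C : ℝ, ∀ ω, |Z j ω| ≤ C) :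
    ∃ C : ℝ, 0 ≤ C ∧ ∀ ω, |∏ j ∈ T, Z j ω| ≤ C := by
  classical
  induction T using Finset.induction with
  | empty => exact ⟨1, zero_le_one, fun ω => by simp⟩
  | @insert a T haT ih =>
    obtain ⟨Cp, hCp0, hCp⟩ := ih fun j hj => hbdd j (Finset.mem_insert_of_mem hj)
    obtain ⟨Ca, hCa⟩ := hbdd a (Finset.mem_insert_self _ _)
    refine ⟨max Ca 0 * Cp, mul_nonneg (le_max_right _ _) hCp0, fun ω => ?_⟩
    rw [Finset.prod_insert haT, abs_mul]
    exact mul_le_mul (le_max_of_le_left (hCa ω)) (hCp ω) (abs_nonneg _) (le_max_right _ _)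

lemma my_integral_indep_prod {Ω : Type*} [MeasurableSpace Ω] {P : Measure Ω}
    [IsProbabilityMeasure P] (Z : ℕ → Ω → ℝ)
    (hind : iIndepFun Z P)
    (hmeas : ∀ j, Measurable (Z j)) (T : Finset ℕ)
    (hbdd : ∀ j ∈ T, ∃ C : ℝ, ∀ ω, |Z j ω| ≤ C) :
    ∫ ω, ∏ j ∈ T, Z j ω ∂P = ∏ j ∈ T, ∫ ω, Z j ω ∂P := by
  classical
  induction T using Finset.induction with
  | empty => simp
  | @insert a T haT ih =>
    have hprodmeas : Measurable fun ω => ∏ j ∈ T, Z j ω :=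
      Finset.measurable_prod T fun j _ => hmeas j
    obtain ⟨Cp, hCp0, hCp⟩ := my_bdd_prod Z T fun j hj => hbdd j (Finset.mem_insert_of_mem hj)
    obtain ⟨Ca, hCa⟩ := hbdd a (Finset.mem_insert_self _ _)
    have hintP : Integrable (fun ω => ∏ j ∈ T, Z j ω) P :=
      my_integrable_of_abs_le hprodmeas _ hCp
    have hintA : Integrable (Z a) P := my_integrable_of_abs_le (hmeas a) _ hCa
    have hIndep : IndepFun (∏ j ∈ T, Z j) (Z a) P :=
      hind.indepFun_finsetProd_of_notMem hmeas haT
    have hkey := hIndep.symm.integral_mul_eq_mul_integral hintA.aestronglyMeasurable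
      (show Integrable (∏ j ∈ T, Z j) P by simpa [Finset.prod_fn] using hintP).aestronglyMeasurable
    have heq : (∫ ω, Z a ω * ∏ j ∈ T, Z j ω ∂P)
        = (∫ ω, Z a ω ∂P) * ∫ ω, ∏ j ∈ T, Z j ω ∂P := by
      simpa [Pi.mul_apply, Finset.prod_fn] using hkey
    simp only [Finset.prod_insert haT]
    rw [heq, ih fun j hj => hbdd j (Finset.mem_insert_of_mem hj)]


/-- `E[(Σ_{j≠k, j,k≠i} Ā_{ij} μ_{jk})^{2t}] = O((n p_n)^{3t})`
uniformly in `i ∈ [n]`. -/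
theorem centered_linear_mu_moment
    {Ω : ℕ → Type} [∀ n, MeasurableSpace (Ω n)] (α β : ℝ)
    (μ : ∀ n, Measure (Ω n)) (w : ℕ → ℕ → ℕ → ℝ) (A : ∀ n, ℕ → ℕ → Ω n → ℝ)
    (hmodel : IsHeterER α β μ w A) (t : ℕ) (ht : 0 < t) :
    ∃ C : ℝ, 0 < C ∧ ∃ N : ℕ, ∀ n ≥ N, ∀ i ∈ Finset.range n,
      (∫ ω, (∑ j ∈ (Finset.range n).erase i, ∑ k ∈ ((Finset.range n).erase i).erase j,
          Abar α w A n i j ω * edgeP α w n j k) ^ (2 * t) ∂μ n) ≤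
        C * ((n : ℝ) * pn α n) ^ (3 * t) := by
  classical
  obtain ⟨hα0, hα1⟩ := hmodel.alpha_mem
  obtain ⟨hβ0, hβ1⟩ := hmodel.beta_mem
  have htpos : (0:ℝ) < (t:ℝ) := by exact_mod_cast ht
  refine ⟨(2:ℝ)^t * (t:ℝ)^(2*t+1) * (t:ℝ) + 1, by positivity, 1, ?_⟩
  intro n hn i hi
  haveI : IsProbabilityMeasure (μ n) := hmodel.prob n
  have hn1 : (1:ℝ) ≤ (n:ℝ) := by exact_mod_cast hn
  have hnpos : (0:ℝ) < (n:ℝ) := lt_of_lt_of_le one_pos hn1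
  have hpn_pos : 0 < pn α n := Real.rpow_pos_of_pos hnpos _
  have hpn_le1 : pn α n ≤ 1 :=
    Real.rpow_le_one_of_one_le_of_nonpos hn1 (by linarith)
  set q : ℝ := (n:ℝ) * pn α n with hq
  have hq_pos : 0 < q := mul_pos hnpos hpn_pos
  have hq1 : (1:ℝ) ≤ q := by
    have h1 : q = (n:ℝ) ^ ((1:ℝ) - α) := by
      rw [hq, pn, sub_eq_add_neg, Real.rpow_add hnpos, Real.rpow_one]
    rw [h1]
    calc (1:ℝ) = (1:ℝ) ^ ((1:ℝ) - α) := (Real.one_rpow _).symm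
    _ ≤ (n:ℝ) ^ ((1:ℝ) - α) := Real.rpow_le_rpow zero_le_one hn1 (by linarith)
  set s : Finset ℕ := (Finset.range n).erase i with hs
  -- edge bounds
  have hed : ∀ j ∈ Finset.range n, ∀ k ∈ Finset.range n,
      0 ≤ edgeP α w n j k ∧ edgeP α w n j k ≤ pn α n := by
    intro j hj k hk
    by_cases hjk : j = k
    · subst hjk; rw [edgeP, hmodel.w_diag n j, mul_zero]
      exact ⟨le_refl 0, le_of_lt hpn_pos⟩
    · obtain ⟨hwl, hwu⟩ := hmodel.w_mem n j hj k hk hjk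
      constructor
      · exact mul_nonneg hpn_pos.le (le_trans hβ0.le hwl)
      · calc pn α n * w n j k ≤ pn α n * 1 :=
            mul_le_mul_of_nonneg_left hwu hpn_pos.le
        _ = pn α n := mul_one _
  -- the coefficients m j
  set m : ℕ → ℝ := fun j => ∑ k ∈ s.erase j, edgeP α w n j k with hm_def
  have hm : ∀ j ∈ Finset.range n, 0 ≤ m j ∧ m j ≤ q := by
    intro j hj
    constructor
    · apply Finset.sum_nonneg
      intro k hk
      exact (hed j hj k (Finset.mem_of_mem_erase (Finset.mem_of_mem_erase hk))).1
    · calc m j ≤ ∑ _k ∈ s.erase j, pn α n := Finset.sum_le_sum fun k hk =>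
          (hed j hj k (Finset.mem_of_mem_erase (Finset.mem_of_mem_erase hk))).2
      _ = ((s.erase j).card : ℝ) * pn α n := by rw [Finset.sum_const, nsmul_eq_mul]
      _ ≤ (n:ℝ) * pn α n := by
          apply mul_le_mul_of_nonneg_right _ hpn_pos.le
          have hc : (s.erase j).card ≤ n := by
            calc (s.erase j).card ≤ s.card := Finset.card_erase_le
            _ ≤ (Finset.range n).card := Finset.card_erase_le
            _ = n := Finset.card_range n
          exact_mod_cast hc
  -- the injection into edges and independence
  set e : ℕ → {p : ℕ × ℕ // p.1 < p.2} := fun j =>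
    if h : i < j then ⟨(i, j), h⟩ else if h' : j < i then ⟨(j, i), h'⟩
      else ⟨(i + 1, i + 2), by omega⟩ with he_def
  have he_inj : Function.Injective e := by
    intro a b hab
    simp only [he_def] at hab
    split_ifs at hab <;> simp only [Subtype.mk.injEq, Prod.mk.injEq] at hab <;> omega
  set Z : ℕ → Ω n → ℝ := fun j ω => A n (e j).1.1 (e j).1.2 ω with hZ_def
  have hindZ : iIndepFun Z (μ n) :=
    my_iIndepFun_precomp he_inj (hmodel.A_indep n)
  have hZmeas : ∀ j, Measurable (Z j) := fun j => hmodel.A_meas n _ _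
  have hZeq : ∀ j ∈ s, Z j = A n i j := by
    intro j hj
    have hji : j ≠ i := Finset.ne_of_mem_erase hj
    funext ω
    simp only [hZ_def, he_def]
    split_ifs with h1 h2
    · rfl
    · exact hmodel.A_symm n j i ω
    · omega
  set Y : ℕ → Ω n → ℝ := fun j ω => (Z j ω - edgeP α w n i j) * m j with hY_def
  have hYmeas : ∀ j, Measurable (Y j) := fun j =>
    ((hZmeas j).sub measurable_const).mul_const _
  have hindY : iIndepFun Y (μ n) := by
    have := hindZ.comp (fun j x => (x - edgeP α w n i j) * m j)
      (fun j => (measurable_id.sub_const _).mul_const _)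
    exact this
  have hYs : ∀ j ∈ s, ∀ ω, Y j ω = Abar α w A n i j ω * m j := by
    intro j hj ω
    simp only [hY_def, hZeq j hj, Abar]
  -- bounds on Y for j ∈ s
  have hsub : ∀ j ∈ s, j ∈ Finset.range n := fun j hj => Finset.mem_of_mem_erase hj
  have hAbar_abs : ∀ j ∈ s, ∀ ω, |A n i j ω - edgeP α w n i j| ≤ 1 := by
    intro j hj ω
    have hji : i ≠ j := fun h => Finset.ne_of_mem_erase hj h.symm
    obtain ⟨he0, he1⟩ := hed i hi j (hsub j hj)
    have he1' : edgeP α w n i j ≤ 1 := he1.trans hpn_le1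
    rcases hmodel.A_vals n i j ω with h | h <;> rw [h, abs_le] <;> constructor <;> linarith
  have hY_abs : ∀ j ∈ s, ∀ ω, |Y j ω| ≤ q := by
    intro j hj ω
    rw [hY_def]
    simp only
    rw [abs_mul]
    obtain ⟨hm0, hmq⟩ := hm j (hsub j hj)
    calc |Z j ω - edgeP α w n i j| * |m j| ≤ 1 * q := by
          apply mul_le_mul _ _ (abs_nonneg _) zero_le_one
          · rw [hZeq j hj]; exact hAbar_abs j hj ω
          · rw [abs_of_nonneg hm0]; exact hmq
    _ = q := one_mul q
  -- expectation facts
  have hEA : ∀ j ∈ s, ∫ ω, A n i j ω ∂μ n = edgeP α w n i j := by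
    intro j hj
    have hji : i ≠ j := fun h => Finset.ne_of_mem_erase hj h.symm
    have hmeasE : MeasurableSet {ω | A n i j ω = 1} :=
      hmodel.A_meas n i j (measurableSet_singleton 1)
    have hAind : A n i j = Set.indicator {ω | A n i j ω = 1} 1 := by
      funext ω
      rcases hmodel.A_vals n i j ω with h | h <;>
        simp [Set.indicator_apply, h, Set.mem_setOf_eq]
    rw [hAind, integral_indicator_one hmeasE, measureReal_def, hmodel.A_prob n i hi j (hsub j hj) hji,
      ENNReal.toReal_ofReal (hed i hi j (hsub j hj)).1]
  have hintA : ∀ j ∈ s, Integrable (A n i j) (μ n) := by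
    intro j hj
    apply my_integrable_of_abs_le (hmodel.A_meas n i j) 1
    intro ω
    rcases hmodel.A_vals n i j ω with h | h <;> rw [h] <;> norm_num
  have hEY0 : ∀ j ∈ s, ∫ ω, Y j ω ∂μ n = 0 := by
    intro j hj
    have : ∫ ω, Y j ω ∂μ n = (∫ ω, (A n i j ω - edgeP α w n i j) ∂μ n) * m j := by
      rw [← integral_mul_const]
      apply integral_congr_ae
      exact Filter.Eventually.of_forall fun ω => by rw [hY_def]; simp [hZeq j hj]
    rw [this, integral_sub (hintA j hj) (integrable_const _), integral_const, hEA j hj]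
    simp
  have hEYc : ∀ j ∈ s, ∀ c : ℕ, 1 ≤ c →
      |∫ ω, (Y j ω) ^ c ∂μ n| ≤ 2 * pn α n * q ^ c := by
    intro j hj c hc
    have hint1 : Integrable (fun ω => (Y j ω) ^ c) (μ n) := by
      apply my_integrable_of_abs_le ((hYmeas j).pow_const c) (q ^ c)
      intro ω
      rw [abs_pow]
      exact pow_le_pow_left₀ (abs_nonneg _) (hY_abs j hj ω) c
    have hint2 : Integrable (fun ω => |A n i j ω - edgeP α w n i j| * q ^ c) (μ n) :=
      (((hintA j hj).sub (integrable_const _)).abs).mul_const _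
    calc |∫ ω, (Y j ω) ^ c ∂μ n| ≤ ∫ ω, |(Y j ω) ^ c| ∂μ n := by
          simpa [Real.norm_eq_abs] using
            norm_integral_le_integral_norm (μ := μ n) (fun ω => (Y j ω) ^ c)
    _ ≤ ∫ ω, |A n i j ω - edgeP α w n i j| * q ^ c ∂μ n := by
        apply integral_mono hint1.abs hint2
        intro ω
        show |(Y j ω) ^ c| ≤ |A n i j ω - edgeP α w n i j| * q ^ c
        rw [abs_pow]
        have h1 : |Y j ω| ^ c ≤ |A n i j ω - edgeP α w n i j| * q ^ c := by
          have hYeq : |Y j ω| = |A n i j ω - edgeP α w n i j| * m j := by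
            rw [hY_def]; simp only; rw [hZeq j hj, abs_mul,
              abs_of_nonneg (hm j (hsub j hj)).1]
          rw [hYeq, mul_pow]
          apply mul_le_mul
          · calc |A n i j ω - edgeP α w n i j| ^ c
                ≤ |A n i j ω - edgeP α w n i j| ^ 1 :=
                  pow_le_pow_of_le_one (abs_nonneg _) (hAbar_abs j hj ω) hc
            _ = _ := pow_one _
          · exact pow_le_pow_left₀ (hm j (hsub j hj)).1 (hm j (hsub j hj)).2 c
          · exact pow_nonneg (hm j (hsub j hj)).1 c
          · exact abs_nonneg _
        exact h1
    _ = (∫ ω, |A n i j ω - edgeP α w n i j| ∂μ n) * q ^ c := integral_mul_const _ _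
    _ ≤ (2 * pn α n) * q ^ c := by
        apply mul_le_mul_of_nonneg_right _ (pow_nonneg hq_pos.le c)
        have hint3 : Integrable (fun ω => A n i j ω + edgeP α w n i j) (μ n) :=
          (hintA j hj).add (integrable_const _)
        calc ∫ ω, |A n i j ω - edgeP α w n i j| ∂μ n
            ≤ ∫ ω, (A n i j ω + edgeP α w n i j) ∂μ n := by
              apply integral_mono ((hintA j hj).sub (integrable_const _)).abs hint3
              intro ω
              have hA0 : 0 ≤ A n i j ω := by
                rcases hmodel.A_vals n i j ω with h | h <;> rw [h] <;> norm_num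
              have he0 := (hed i hi j (hsub j hj)).1
              show |A n i j ω - edgeP α w n i j| ≤ A n i j ω + edgeP α w n i j
              rw [abs_sub_comm]
              calc |edgeP α w n i j - A n i j ω| ≤ |edgeP α w n i j| + |A n i j ω| :=
                    abs_sub _ _
              _ = edgeP α w n i j + A n i j ω := by
                  rw [abs_of_nonneg he0, abs_of_nonneg hA0]
              _ = A n i j ω + edgeP α w n i j := add_comm _ _
        _ = edgeP α w n i j + edgeP α w n i j := by
            rw [integral_add (hintA j hj) (integrable_const _), integral_const, hEA j hj]
            simp
        _ ≤ 2 * pn α n := by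
            have := (hed i hi j (hsub j hj)).2
            linarith
  -- expansion of the power of the sum
  set F : Finset (Fin (2*t) → ℕ) := Fintype.piFinset (fun _ : Fin (2*t) => s) with hF
  have hFmem : ∀ g ∈ F, ∀ l, g l ∈ s := fun g hg => Fintype.mem_piFinset.mp hg
  have hsum_pow : ∀ ω : Ω n,
      (∑ j ∈ s, ∑ k ∈ s.erase j, Abar α w A n i j ω * edgeP α w n j k) ^ (2*t)
        = ∑ g ∈ F, ∏ l : Fin (2*t), Y (g l) ω := by
    intro ω
    have h1 : (∑ j ∈ s, ∑ k ∈ s.erase j, Abar α w A n i j ω * edgeP α w n j k)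
        = ∑ j ∈ s, Y j ω := by
      apply Finset.sum_congr rfl
      intro j hj
      rw [← Finset.mul_sum, hYs j hj ω]
    rw [h1, ← Fin.prod_const (2*t) (∑ j ∈ s, Y j ω), Finset.prod_univ_sum]
  have hint_g : ∀ g ∈ F, Integrable (fun ω => ∏ l : Fin (2*t), Y (g l) ω) (μ n) := by
    intro g hg
    apply my_integrable_of_abs_le (Finset.measurable_prod _ fun l _ => hYmeas _) (q^(2*t))
    intro ω
    show |∏ l : Fin (2*t), Y (g l) ω| ≤ q ^ (2*t)
    rw [Finset.abs_prod]
    calc ∏ l : Fin (2*t), |Y (g l) ω|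
        ≤ ∏ _l : Fin (2*t), q :=
          Finset.prod_le_prod (fun l _ => abs_nonneg _) (fun l _ => hY_abs _ (hFmem g hg l) ω)
    _ = q ^ (2*t) := by rw [Finset.prod_const, Finset.card_univ, Fintype.card_fin]
  have hsplit : (∫ ω, (∑ j ∈ s, ∑ k ∈ s.erase j,
        Abar α w A n i j ω * edgeP α w n j k) ^ (2*t) ∂μ n)
      = ∑ g ∈ F, ∫ ω, ∏ l : Fin (2*t), Y (g l) ω ∂μ n := by
    rw [integral_congr_ae (Filter.Eventually.of_forall hsum_pow)]
    exact integral_finset_sum F hint_g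
  -- factor each term over the image
  have hfac : ∀ g : Fin (2*t) → ℕ, ∀ ω : Ω n, ∏ l : Fin (2*t), Y (g l) ω
      = ∏ j ∈ Finset.image g Finset.univ,
          (Y j ω) ^ (Finset.univ.filter (fun l => g l = j)).card :=
    fun g ω => Finset.prod_comp (fun j => Y j ω) g
  have himel : ∀ g ∈ F, ∀ j ∈ Finset.image g Finset.univ, j ∈ s := by
    intro g hg j hj
    obtain ⟨l, _, rfl⟩ := Finset.mem_image.mp hj
    exact hFmem g hg l
  have hI : ∀ g ∈ F, ∫ ω, ∏ l : Fin (2*t), Y (g l) ω ∂μ n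
      = ∏ j ∈ Finset.image g Finset.univ,
          ∫ ω, (Y j ω) ^ ((Finset.univ.filter (fun l => g l = j)).card) ∂μ n := by
    intro g hg
    rw [integral_congr_ae (Filter.Eventually.of_forall (hfac g))]
    exact my_integral_indep_prod
      (fun j ω => (Y j ω) ^ ((Finset.univ.filter (fun l => g l = j)).card))
      (hindY.comp (fun j x => x ^ ((Finset.univ.filter (fun l => g l = j)).card))
        (fun j => measurable_id.pow_const _))
      (fun j => (hYmeas j).pow_const _) _
      (fun j hj => ⟨q ^ ((Finset.univ.filter (fun l => g l = j)).card), fun ω => by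
        rw [abs_pow]
        exact pow_le_pow_left₀ (abs_nonneg _) (hY_abs j (himel g hg j hj) ω) _⟩)
  -- fiber cardinality facts
  have hcsum : ∀ g : Fin (2*t) → ℕ, ∑ j ∈ Finset.image g Finset.univ,
      (Finset.univ.filter (fun l => g l = j)).card = 2*t := by
    intro g
    rw [← Finset.card_eq_sum_card_image g Finset.univ, Finset.card_univ, Fintype.card_fin]
  have hc1 : ∀ g : Fin (2*t) → ℕ, ∀ j ∈ Finset.image g Finset.univ,
      1 ≤ (Finset.univ.filter (fun l => g l = j)).card := by
    intro g j hj
    obtain ⟨l, hl, rfl⟩ := Finset.mem_image.mp hj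
    exact Finset.card_pos.mpr ⟨l, Finset.mem_filter.mpr ⟨Finset.mem_univ l, rfl⟩⟩
  -- per-term bound
  have hterm : ∀ g ∈ F, |∫ ω, ∏ l : Fin (2*t), Y (g l) ω ∂μ n| ≤
      (if ∀ j ∈ Finset.image g Finset.univ,
          2 ≤ (Finset.univ.filter (fun l => g l = j)).card
        then (2 * pn α n) ^ (Finset.image g Finset.univ).card * q ^ (2*t) else 0) := by
    intro g hg
    by_cases hcase : ∀ j ∈ Finset.image g Finset.univ,
        2 ≤ (Finset.univ.filter (fun l => g l = j)).card
    · rw [if_pos hcase, hI g hg, Finset.abs_prod]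
      calc ∏ j ∈ Finset.image g Finset.univ,
            |∫ ω, (Y j ω) ^ ((Finset.univ.filter (fun l => g l = j)).card) ∂μ n|
          ≤ ∏ j ∈ Finset.image g Finset.univ,
            (2 * pn α n * q ^ ((Finset.univ.filter (fun l => g l = j)).card)) :=
            Finset.prod_le_prod (fun j _ => abs_nonneg _)
              (fun j hj => hEYc j (himel g hg j hj) _ (by have := hcase j hj; omega))
      _ = (2 * pn α n) ^ (Finset.image g Finset.univ).card * q ^ (2*t) := by
          rw [Finset.prod_mul_distrib, Finset.prod_const,
            Finset.prod_pow_eq_pow_sum, hcsum g]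
    · rw [if_neg hcase]
      push_neg at hcase
      obtain ⟨j, hjT, hj2⟩ := hcase
      have hcj : (Finset.univ.filter (fun l => g l = j)).card = 1 := by
        have := hc1 g j hjT; omega
      have hzero : ∫ ω, (Y j ω) ^ ((Finset.univ.filter (fun l => g l = j)).card) ∂μ n = 0 := by
        simp only [hcj, pow_one]
        exact hEY0 j (himel g hg j hjT)
      rw [hI g hg, Finset.prod_eq_zero hjT hzero, abs_zero]
  -- sum the bounds
  set G : Finset (Fin (2*t) → ℕ) := F.filter (fun g => ∀ j ∈ Finset.image g Finset.univ,
      2 ≤ (Finset.univ.filter (fun l => g l = j)).card) with hG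
  have hstep1 : (∑ g ∈ F, ∫ ω, ∏ l : Fin (2*t), Y (g l) ω ∂μ n)
      ≤ ∑ g ∈ G, (2 * pn α n) ^ (Finset.image g Finset.univ).card * q ^ (2*t) := by
    calc (∑ g ∈ F, ∫ ω, ∏ l : Fin (2*t), Y (g l) ω ∂μ n)
        ≤ ∑ g ∈ F, |∫ ω, ∏ l : Fin (2*t), Y (g l) ω ∂μ n| :=
          Finset.sum_le_sum fun g _ => le_abs_self _
    _ ≤ ∑ g ∈ F, (if ∀ j ∈ Finset.image g Finset.univ,
          2 ≤ (Finset.univ.filter (fun l => g l = j)).card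
        then (2 * pn α n) ^ (Finset.image g Finset.univ).card * q ^ (2*t) else 0) :=
          Finset.sum_le_sum hterm
    _ = _ := (Finset.sum_filter _ _).symm
  -- properties of images of g ∈ G
  have hGprop : ∀ g ∈ G, 1 ≤ (Finset.image g Finset.univ).card ∧
      (Finset.image g Finset.univ).card ≤ t ∧ Finset.image g Finset.univ ⊆ s := by
    intro g hg
    obtain ⟨hgF, hgall⟩ := Finset.mem_filter.mp hg
    refine ⟨?_, ?_, fun j hj => himel g hgF j hj⟩
    · apply Finset.card_pos.mpr
      refine ⟨g ⟨0, by omega⟩, Finset.mem_image_of_mem g (Finset.mem_univ _)⟩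
    · have h2d : 2 * (Finset.image g Finset.univ).card ≤ 2 * t := by
        calc 2 * (Finset.image g Finset.univ).card
            = ∑ _j ∈ Finset.image g Finset.univ, 2 := by
              rw [Finset.sum_const, smul_eq_mul, mul_comm]
        _ ≤ ∑ j ∈ Finset.image g Finset.univ,
              (Finset.univ.filter (fun l => g l = j)).card :=
            Finset.sum_le_sum hgall
        _ = 2 * t := hcsum g
      omega
  -- group by image
  have hstep2 : (∑ g ∈ G, (2 * pn α n) ^ (Finset.image g Finset.univ).card * q ^ (2*t))
      = ∑ T ∈ G.image (fun g => Finset.image g Finset.univ),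
          ∑ g ∈ G.filter (fun g => Finset.image g Finset.univ = T),
            (2 * pn α n) ^ (Finset.image g Finset.univ).card * q ^ (2*t) :=
    (Finset.sum_fiberwise_of_maps_to (fun g hg => Finset.mem_image_of_mem _ hg) _).symm
  have hfibcard : ∀ T ∈ G.image (fun g => Finset.image g Finset.univ),
      ((G.filter (fun g => Finset.image g Finset.univ = T)).card : ℝ) ≤ (t:ℝ) ^ (2*t) := by
    intro T hT
    obtain ⟨g0, hg0, rfl⟩ := Finset.mem_image.mp hT
    have hsubp : G.filter (fun g => Finset.image g Finset.univ = Finset.image g0 Finset.univ)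
        ⊆ Fintype.piFinset (fun _ : Fin (2*t) => Finset.image g0 Finset.univ) := by
      intro g hg
      obtain ⟨_, him⟩ := Finset.mem_filter.mp hg
      exact Fintype.mem_piFinset.mpr fun l => him ▸ Finset.mem_image_of_mem g (Finset.mem_univ l)
    calc ((G.filter (fun g => Finset.image g Finset.univ = Finset.image g0 Finset.univ)).card : ℝ)
        ≤ ((Fintype.piFinset (fun _ : Fin (2*t) => Finset.image g0 Finset.univ)).card : ℝ) := by
          exact_mod_cast Finset.card_le_card hsubp
    _ = (((Finset.image g0 Finset.univ).card : ℝ)) ^ (2*t) := by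
          rw [Fintype.card_piFinset_const]; push_cast; ring
    _ ≤ (t:ℝ) ^ (2*t) := by
          apply pow_le_pow_left₀ (Nat.cast_nonneg _)
          exact_mod_cast (hGprop g0 hg0).2.1
  have hq2t : (0:ℝ) ≤ q ^ (2*t) := pow_nonneg hq_pos.le _
  have hstep3 : (∑ T ∈ G.image (fun g => Finset.image g Finset.univ),
          ∑ g ∈ G.filter (fun g => Finset.image g Finset.univ = T),
            (2 * pn α n) ^ (Finset.image g Finset.univ).card * q ^ (2*t))
      ≤ ∑ T ∈ G.image (fun g => Finset.image g Finset.univ),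
          (t:ℝ) ^ (2*t) * ((2:ℝ) ^ t * (pn α n) ^ T.card) * q ^ (2*t) := by
    apply Finset.sum_le_sum
    intro T hT
    obtain ⟨g0, hg0, hTg0⟩ := Finset.mem_image.mp hT
    have hTcard : T.card ≤ t := hTg0 ▸ (hGprop g0 hg0).2.1
    have hinner : ∑ g ∈ G.filter (fun g => Finset.image g Finset.univ = T),
        (2 * pn α n) ^ (Finset.image g Finset.univ).card * q ^ (2*t)
        = ((G.filter (fun g => Finset.image g Finset.univ = T)).card : ℝ)
          * ((2 * pn α n) ^ T.card * q ^ (2*t)) := by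
      rw [Finset.sum_congr rfl (fun g hg => by
        rw [(Finset.mem_filter.mp hg).2]), Finset.sum_const, nsmul_eq_mul]
    rw [hinner]
    have hbase : (0:ℝ) ≤ 2 * pn α n := by positivity
    have h2pn : (2 * pn α n) ^ T.card ≤ (2:ℝ) ^ t * (pn α n) ^ T.card := by
      rw [mul_pow]
      apply mul_le_mul_of_nonneg_right _ (pow_nonneg hpn_pos.le _)
      exact pow_le_pow_right₀ one_le_two hTcard
    calc ((G.filter (fun g => Finset.image g Finset.univ = T)).card : ℝ)
          * ((2 * pn α n) ^ T.card * q ^ (2*t))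
        ≤ (t:ℝ) ^ (2*t) * ((2:ℝ) ^ t * (pn α n) ^ T.card * q ^ (2*t)) := by
          apply mul_le_mul (hfibcard T hT) _ (by positivity) (by positivity)
          exact mul_le_mul_of_nonneg_right h2pn hq2t
    _ = (t:ℝ) ^ (2*t) * ((2:ℝ) ^ t * (pn α n) ^ T.card) * q ^ (2*t) := by ring
  -- bound the sum over images by the sum over small subsets of s
  have hsubun : G.image (fun g => Finset.image g Finset.univ)
      ⊆ (Finset.range t).biUnion (fun d => s.powersetCard (d+1)) := by
    intro T hT
    obtain ⟨g0, hg0, rfl⟩ := Finset.mem_image.mp hT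
    obtain ⟨h1, h2, h3⟩ := hGprop g0 hg0
    apply Finset.mem_biUnion.mpr
    refine ⟨(Finset.image g0 Finset.univ).card - 1, Finset.mem_range.mpr (by omega), ?_⟩
    apply Finset.mem_powersetCard.mpr
    exact ⟨h3, by omega⟩
  have hsum_pn : ∑ T ∈ G.image (fun g => Finset.image g Finset.univ), (pn α n) ^ T.card
      ≤ (t:ℝ) * q ^ t := by
    have hdisj : (↑(Finset.range t) : Set ℕ).PairwiseDisjoint
        (fun d => s.powersetCard (d+1)) := by
      intro a _ b _ hab
      apply Finset.disjoint_left.mpr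
      intro T hTa hTb
      have h1 := (Finset.mem_powersetCard.mp hTa).2
      have h2 := (Finset.mem_powersetCard.mp hTb).2
      omega
    calc ∑ T ∈ G.image (fun g => Finset.image g Finset.univ), (pn α n) ^ T.card
        ≤ ∑ T ∈ (Finset.range t).biUnion (fun d => s.powersetCard (d+1)), (pn α n) ^ T.card :=
          Finset.sum_le_sum_of_subset_of_nonneg hsubun
            (fun T _ _ => pow_nonneg hpn_pos.le _)
    _ = ∑ d ∈ Finset.range t, ∑ T ∈ s.powersetCard (d+1), (pn α n) ^ T.card :=
          Finset.sum_biUnion hdisj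
    _ ≤ ∑ _d ∈ Finset.range t, q ^ t := by
        apply Finset.sum_le_sum
        intro d hd
        have hdlt : d < t := Finset.mem_range.mp hd
        calc ∑ T ∈ s.powersetCard (d+1), (pn α n) ^ T.card
            = ∑ _T ∈ s.powersetCard (d+1), (pn α n) ^ (d+1) :=
              Finset.sum_congr rfl (fun T hT => by
                rw [(Finset.mem_powersetCard.mp hT).2])
        _ = ((s.powersetCard (d+1)).card : ℝ) * (pn α n) ^ (d+1) := by
              rw [Finset.sum_const, nsmul_eq_mul]
        _ ≤ (n:ℝ) ^ (d+1) * (pn α n) ^ (d+1) := by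
              apply mul_le_mul_of_nonneg_right _ (pow_nonneg hpn_pos.le _)
              rw [Finset.card_powersetCard]
              have hcard : s.card ≤ n := by
                calc s.card ≤ (Finset.range n).card := Finset.card_erase_le
                _ = n := Finset.card_range n
              calc ((s.card.choose (d+1) : ℕ) : ℝ) ≤ ((s.card ^ (d+1) : ℕ) : ℝ) := by
                    exact_mod_cast Nat.choose_le_pow _ _
              _ ≤ ((n ^ (d+1) : ℕ) : ℝ) := by
                    exact_mod_cast Nat.pow_le_pow_left hcard _
              _ = (n:ℝ) ^ (d+1) := by push_cast; ring
        _ = q ^ (d+1) := by rw [hq, mul_pow]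
        _ ≤ q ^ t := pow_le_pow_right₀ hq1 (by omega)
    _ = (t:ℝ) * q ^ t := by rw [Finset.sum_const, Finset.card_range, nsmul_eq_mul]
  -- put everything together
  have hfinal : (∑ T ∈ G.image (fun g => Finset.image g Finset.univ),
          (t:ℝ) ^ (2*t) * ((2:ℝ) ^ t * (pn α n) ^ T.card) * q ^ (2*t))
      ≤ ((2:ℝ) ^ t * (t:ℝ) ^ (2*t+1) * (t:ℝ)) * q ^ (3*t) := by
    have h1 : (∑ T ∈ G.image (fun g => Finset.image g Finset.univ),
          (t:ℝ) ^ (2*t) * ((2:ℝ) ^ t * (pn α n) ^ T.card) * q ^ (2*t))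
        = ((t:ℝ) ^ (2*t) * (2:ℝ) ^ t * q ^ (2*t)) *
            ∑ T ∈ G.image (fun g => Finset.image g Finset.univ), (pn α n) ^ T.card := by
      rw [Finset.mul_sum]
      exact Finset.sum_congr rfl fun T _ => by ring
    rw [h1]
    calc ((t:ℝ) ^ (2*t) * (2:ℝ) ^ t * q ^ (2*t)) *
            ∑ T ∈ G.image (fun g => Finset.image g Finset.univ), (pn α n) ^ T.card
        ≤ ((t:ℝ) ^ (2*t) * (2:ℝ) ^ t * q ^ (2*t)) * ((t:ℝ) * q ^ t) := by
          apply mul_le_mul_of_nonneg_left hsum_pn (by positivity)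
    _ = ((2:ℝ) ^ t * (t:ℝ) ^ (2*t+1)) * q ^ (3*t) := by
          have hqq : q ^ (2*t) * q ^ t = q ^ (3*t) := by
            rw [← pow_add]; congr 1; omega
          have htt : (t:ℝ) ^ (2*t) * (t:ℝ) = (t:ℝ) ^ (2*t+1) := pow_succ _ _ |>.symm
          rw [← hqq, ← htt]; ring
    _ ≤ ((2:ℝ) ^ t * (t:ℝ) ^ (2*t+1) * (t:ℝ)) * q ^ (3*t) := by
          apply mul_le_mul_of_nonneg_right _ (pow_nonneg hq_pos.le _)
          have ht1 : (1:ℝ) ≤ (t:ℝ) := by exact_mod_cast ht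
          exact le_mul_of_one_le_right (by positivity) ht1
  -- conclude
  rw [hsplit]
  calc (∑ g ∈ F, ∫ ω, ∏ l : Fin (2*t), Y (g l) ω ∂μ n)
      ≤ ((2:ℝ) ^ t * (t:ℝ) ^ (2*t+1) * (t:ℝ)) * q ^ (3*t) :=
        le_trans hstep1 (le_trans (le_of_eq hstep2) (le_trans hstep3 hfinal))
  _ ≤ ((2:ℝ) ^ t * (t:ℝ) ^ (2*t+1) * (t:ℝ) + 1) * q ^ (3*t) := by
      apply mul_le_mul_of_nonneg_right _ (pow_nonneg hq_pos.le _)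
      linarith
end
end
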